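/- arXiv:1606.08379 — 7 statements merged into one kernel-verified Lean document; each statement's English description precedes it below -/
import Mathlib

section
/- If q = (q: E → M, σ, ζ, λ) is a differential bundle in a tangent category, then T(q) := (T(q): TE → TM, T(σ), T(ζ), T(λ)c) is again a differential bundle. -/
open CategoryTheory CategoryTheory.Limits

universe v u

variable {C : Type u} [Category.{v} C]

/-- Iterated power of an endofunctor. -/
def fpow (T : C ⥤ C) : ℕ → C ⥤ C
  | 0 => 𝟭 C
  | n + 1 => fpow T n ⋙ T

/-- Tangent structure on a category (Cockett–Cruttwell). -/
structure TangentStructure (C : Type u) [Category.{v} C] where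
  T : C ⥤ C
  p : T ⟶ 𝟭 C
  T2 : C ⥤ C
  π0 : T2 ⟶ T
  π1 : T2 ⟶ T
  /-- the chosen object `T2 M` is the pullback of `p` along itself -/
  isPB0 : ∀ M : C, IsPullback (π0.app M) (π1.app M) (p.app M) (p.app M)
  /-- this pullback is preserved by `T` -/
  isPB1 : ∀ M : C, IsPullback (T.map (π0.app M)) (T.map (π1.app M))
      (T.map (p.app M)) (T.map (p.app M))
  /-- and indeed by every power `Tⁿ` -/
  isPBk : ∀ (k : ℕ) (M : C),
    IsPullback ((fpow T k).map (π0.app M)) ((fpow T k).map (π1.app M))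
      ((fpow T k).map (p.app M)) ((fpow T k).map (p.app M))
  /-- all finite wide pullback powers of `p` exist -/
  hasWide : ∀ (n : ℕ) (M : C),
    HasLimit (WidePullbackShape.wideCospan M (fun _ : Fin n => T.obj M) (fun _ => p.app M))
  /-- and are preserved by every power `Tⁿ` -/
  presWide : ∀ (n k : ℕ) (M : C),
    PreservesLimit (WidePullbackShape.wideCospan M (fun _ : Fin n => T.obj M) (fun _ => p.app M))
      (fpow T k)
  add : T2 ⟶ T
  zero : 𝟭 C ⟶ T
  add_p : ∀ M : C, add.app M ≫ p.app M = π0.app M ≫ p.app M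
  zero_p : ∀ M : C, zero.app M ≫ p.app M = 𝟙 M
  add_comm : ∀ {X M : C} (f g : X ⟶ T.obj M) (h : f ≫ p.app M = g ≫ p.app M),
    (isPB0 M).lift f g h ≫ add.app M = (isPB0 M).lift g f h.symm ≫ add.app M
  add_zero : ∀ {X M : C} (f : X ⟶ T.obj M)
    (h : (f ≫ p.app M ≫ zero.app M) ≫ p.app M = f ≫ p.app M),
    (isPB0 M).lift (f ≫ p.app M ≫ zero.app M) f h ≫ add.app M = f
  add_assoc : ∀ {X M : C} (f g h : X ⟶ T.obj M)
    (hfg : f ≫ p.app M = g ≫ p.app M) (hgh : g ≫ p.app M = h ≫ p.app M)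
    (h1 : ((isPB0 M).lift f g hfg ≫ add.app M) ≫ p.app M = h ≫ p.app M)
    (h2 : f ≫ p.app M = ((isPB0 M).lift g h hgh ≫ add.app M) ≫ p.app M),
    (isPB0 M).lift ((isPB0 M).lift f g hfg ≫ add.app M) h h1 ≫ add.app M =
      (isPB0 M).lift f ((isPB0 M).lift g h hgh ≫ add.app M) h2 ≫ add.app M
  l : T ⟶ T ⋙ T
  l_Tp : ∀ M : C, l.app M ≫ T.map (p.app M) = p.app M ≫ zero.app M
  l_zero : ∀ M : C, zero.app M ≫ l.app M = zero.app M ≫ T.map (zero.app M)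
  l_add : ∀ {X M : C} (f g : X ⟶ T.obj M) (h : f ≫ p.app M = g ≫ p.app M)
    (h' : (f ≫ l.app M) ≫ T.map (p.app M) = (g ≫ l.app M) ≫ T.map (p.app M)),
    (isPB0 M).lift f g h ≫ add.app M ≫ l.app M =
      (isPB1 M).lift (f ≫ l.app M) (g ≫ l.app M) h' ≫ T.map (add.app M)
  c : T ⋙ T ⟶ T ⋙ T
  c_p : ∀ M : C, c.app M ≫ p.app (T.obj M) = T.map (p.app M)
  c_zero : ∀ M : C, T.map (zero.app M) ≫ c.app M = zero.app (T.obj M)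
  c_add : ∀ {X M : C} (f g : X ⟶ T.obj (T.obj M))
    (h : f ≫ T.map (p.app M) = g ≫ T.map (p.app M))
    (h' : (f ≫ c.app M) ≫ p.app (T.obj M) = (g ≫ c.app M) ≫ p.app (T.obj M)),
    (isPB1 M).lift f g h ≫ T.map (add.app M) ≫ c.app M =
      (isPB0 (T.obj M)).lift (f ≫ c.app M) (g ≫ c.app M) h' ≫ add.app (T.obj M)
  c_c : ∀ M : C, c.app M ≫ c.app M = 𝟙 _
  l_c : ∀ M : C, l.app M ≫ c.app M = l.app M
  l_l : ∀ M : C, l.app M ≫ T.map (l.app M) = l.app M ≫ l.app (T.obj M)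
  c_coh : ∀ M : C, T.map (c.app M) ≫ c.app (T.obj M) ≫ T.map (c.app M) =
      c.app (T.obj M) ≫ T.map (c.app M) ≫ c.app (T.obj M)
  c_l : ∀ M : C, c.app M ≫ T.map (l.app M) =
      l.app (T.obj M) ≫ T.map (c.app M) ≫ c.app (T.obj M)
  univ : ∀ (k : ℕ) (M : C)
    (h : (π0.app M ≫ l.app M) ≫ T.map (p.app M) =
         (π1.app M ≫ zero.app (T.obj M)) ≫ T.map (p.app M)),
    IsPullback
      ((fpow T k).map ((isPB1 M).lift (π0.app M ≫ l.app M) (π1.app M ≫ zero.app (T.obj M)) h ≫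
        T.map (add.app M)))
      ((fpow T k).map (π0.app M ≫ p.app M))
      ((fpow T k).map (T.map (p.app M)))
      ((fpow T k).map (zero.app M))

namespace TangentStructure

/-- The data of a differential bundle over `M` with total space `E`. -/
structure DiffBundleData (TS : TangentStructure C) (E M : C) where
  q : E ⟶ M
  E2 : C
  p0 : E2 ⟶ E
  p1 : E2 ⟶ E
  σ : E2 ⟶ E
  ζ : M ⟶ E
  lam : E ⟶ TS.T.obj E

variable (TS : TangentStructure C)

/-- The axioms making `D` a differential bundle (without the universality of the lift). -/
structure IsPreDiffBundle {E M : C} (D : TS.DiffBundleData E M) : Prop where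
  isPB0 : IsPullback D.p0 D.p1 D.q D.q
  isPB1 : IsPullback (TS.T.map D.p0) (TS.T.map D.p1) (TS.T.map D.q) (TS.T.map D.q)
  isPBk : ∀ k : ℕ, IsPullback ((fpow TS.T k).map D.p0) ((fpow TS.T k).map D.p1)
      ((fpow TS.T k).map D.q) ((fpow TS.T k).map D.q)
  hasWide : ∀ n : ℕ,
    HasLimit (WidePullbackShape.wideCospan M (fun _ : Fin n => E) (fun _ => D.q))
  presWide : ∀ n k : ℕ,
    PreservesLimit (WidePullbackShape.wideCospan M (fun _ : Fin n => E) (fun _ => D.q))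
      (fpow TS.T k)
  σ_q : D.σ ≫ D.q = D.p0 ≫ D.q
  ζ_q : D.ζ ≫ D.q = 𝟙 M
  σ_comm : ∀ {X : C} (f g : X ⟶ E) (h : f ≫ D.q = g ≫ D.q),
    isPB0.lift f g h ≫ D.σ = isPB0.lift g f h.symm ≫ D.σ
  σ_zero : ∀ {X : C} (f : X ⟶ E) (h : (f ≫ D.q ≫ D.ζ) ≫ D.q = f ≫ D.q),
    isPB0.lift (f ≫ D.q ≫ D.ζ) f h ≫ D.σ = f
  σ_assoc : ∀ {X : C} (f g h : X ⟶ E)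
    (hfg : f ≫ D.q = g ≫ D.q) (hgh : g ≫ D.q = h ≫ D.q)
    (h1 : (isPB0.lift f g hfg ≫ D.σ) ≫ D.q = h ≫ D.q)
    (h2 : f ≫ D.q = (isPB0.lift g h hgh ≫ D.σ) ≫ D.q),
    isPB0.lift (isPB0.lift f g hfg ≫ D.σ) h h1 ≫ D.σ =
      isPB0.lift f (isPB0.lift g h hgh ≫ D.σ) h2 ≫ D.σ
  lam_Tq : D.lam ≫ TS.T.map D.q = D.q ≫ TS.zero.app M
  lam_zero0 : D.ζ ≫ D.lam = TS.zero.app M ≫ TS.T.map D.ζ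
  lam_add0 : ∀ {X : C} (f g : X ⟶ E) (h : f ≫ D.q = g ≫ D.q)
    (h' : (f ≫ D.lam) ≫ TS.T.map D.q = (g ≫ D.lam) ≫ TS.T.map D.q),
    isPB0.lift f g h ≫ D.σ ≫ D.lam =
      isPB1.lift (f ≫ D.lam) (g ≫ D.lam) h' ≫ TS.T.map D.σ
  lam_p : D.lam ≫ TS.p.app E = D.q ≫ D.ζ
  lam_zero1 : D.ζ ≫ D.lam = D.ζ ≫ TS.zero.app E
  lam_add1 : ∀ {X : C} (f g : X ⟶ E) (h : f ≫ D.q = g ≫ D.q)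
    (h' : (f ≫ D.lam) ≫ TS.p.app E = (g ≫ D.lam) ≫ TS.p.app E),
    isPB0.lift f g h ≫ D.σ ≫ D.lam =
      (TS.isPB0 E).lift (f ≫ D.lam) (g ≫ D.lam) h' ≫ TS.add.app E
  lam_l : D.lam ≫ TS.l.app E = D.lam ≫ TS.T.map D.lam

/-- The full axioms for a differential bundle, including the universality of the lift. -/
structure IsDiffBundle {E M : C} (D : TS.DiffBundleData E M)
    extends TS.IsPreDiffBundle D : Prop where
  univ : ∀ (k : ℕ)
    (h : (D.p0 ≫ D.lam) ≫ TS.T.map D.q = (D.p1 ≫ TS.zero.app E) ≫ TS.T.map D.q),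
    IsPullback
      ((fpow TS.T k).map (toIsPreDiffBundle.isPB1.lift (D.p0 ≫ D.lam)
        (D.p1 ≫ TS.zero.app E) h ≫ TS.T.map D.σ))
      ((fpow TS.T k).map (D.p0 ≫ D.q))
      ((fpow TS.T k).map (TS.T.map D.q))
      ((fpow TS.T k).map (TS.zero.app M))

variable {TS}

lemma mu_w {E M : C} {D : TS.DiffBundleData E M} (hD : TS.IsPreDiffBundle D) :
    (D.p0 ≫ D.lam) ≫ TS.T.map D.q = (D.p1 ≫ TS.zero.app E) ≫ TS.T.map D.q := by
  have hz : TS.zero.app E ≫ TS.T.map D.q = D.q ≫ TS.zero.app M := by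
    simpa using (TS.zero.naturality D.q).symm
  rw [Category.assoc, hD.lam_Tq, Category.assoc, hz, ← Category.assoc, ← Category.assoc,
    hD.isPB0.w]

/-- The map `μ = ⟨π₀λ, π₁0⟩T(σ) : E₂ ⟶ TE` of a differential bundle. -/
noncomputable def DiffBundleData.mu {E M : C} (D : TS.DiffBundleData E M)
    (hD : TS.IsPreDiffBundle D) : D.E2 ⟶ TS.T.obj E :=
  hD.isPB1.lift (D.p0 ≫ D.lam) (D.p1 ≫ TS.zero.app E) (mu_w hD) ≫ TS.T.map D.σ

/-- `IsBracket f b` says that `b` satisfies the defining property of the bracket `{f}`: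
`f = ⟨bλ, fp0⟩T(σ)`. -/
def IsBracket {E M : C} (D : TS.DiffBundleData E M)
    (h1 : IsPullback (TS.T.map D.p0) (TS.T.map D.p1) (TS.T.map D.q) (TS.T.map D.q))
    {X : C} (f : X ⟶ TS.T.obj E) (b : X ⟶ E) : Prop :=
  ∃ w, f = h1.lift (b ≫ D.lam) (f ≫ TS.p.app E ≫ TS.zero.app E) w ≫ TS.T.map D.σ

/-- `(f, g)` is a morphism of differential bundles. -/
def IsBundleHom {E M E' M' : C} (D : TS.DiffBundleData E M) (D' : TS.DiffBundleData E' M')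
    (f : E ⟶ E') (g : M ⟶ M') : Prop :=
  f ≫ D'.q = D.q ≫ g

/-- `(f, g)` is a linear morphism of differential bundles. -/
def IsLinearBundleHom {E M E' M' : C} (D : TS.DiffBundleData E M) (D' : TS.DiffBundleData E' M')
    (f : E ⟶ E') (g : M ⟶ M') : Prop :=
  f ≫ D'.q = D.q ≫ g ∧ f ≫ D'.lam = D.lam ≫ TS.T.map f

/-- Applying the tangent functor to a differential bundle. -/
def DiffBundleData.tangent {E M : C} (D : TS.DiffBundleData E M) :
    TS.DiffBundleData (TS.T.obj E) (TS.T.obj M) where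
  q := TS.T.map D.q
  E2 := TS.T.obj D.E2
  p0 := TS.T.map D.p0
  p1 := TS.T.map D.p1
  σ := TS.T.map D.σ
  ζ := TS.T.map D.ζ
  lam := TS.T.map D.lam ≫ TS.c.app E

end TangentStructure

/-! Each axiom for `T(q)` is `T` applied to the corresponding axiom for `q`, corrected by the
canonical flip `c`. Since `T` preserves the pullback `E₂` and the wide pullback `E₃`, an identity
between maps into `T(E)` built from the addition can be tested on the generic pair or triple,
where it is `T` of the identity for `σ`. The lift `T(λ)c` inherits its laws from those of `λ`
through naturality of `c`, `T(0)c = 0`, `cp = T(p)`, `T(+)c = +` and `c ℓ_T = T(ℓ) c_T T(c)`.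
Finally the map `μ` of `T(q)` is `T(μ)c`, so its universality is that of `q` at level `k + 1`,
transported along the isomorphisms `Tᵏ(c)`. -/

lemma fpow_succ_eq_comp (T : C ⥤ C) : ∀ k, fpow T (k + 1) = T ⋙ fpow T k
  | 0 => rfl
  | k + 1 => by
    change fpow T (k + 1) ⋙ T = T ⋙ fpow T k ⋙ T
    rw [fpow_succ_eq_comp T k]
    rfl

namespace CategoryTheory.IsPullback

lemma of_fpow_succ {T : C ⥤ C} {k : ℕ} {P X Y Z : C} {fst : P ⟶ X} {snd : P ⟶ Y}
    {f : X ⟶ Z} {g : Y ⟶ Z}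
    (h : IsPullback ((fpow T (k + 1)).map fst) ((fpow T (k + 1)).map snd)
      ((fpow T (k + 1)).map f) ((fpow T (k + 1)).map g)) :
    IsPullback ((fpow T k).map (T.map fst)) ((fpow T k).map (T.map snd))
      ((fpow T k).map (T.map f)) ((fpow T k).map (T.map g)) := by
  rwa [fpow_succ_eq_comp] at h

lemma lift_eq_of_comp_eq {P X Y Z W : C} {fst : P ⟶ X} {snd : P ⟶ Y} {f : X ⟶ Z} {g : Y ⟶ Z}
    (h : IsPullback fst snd f g) {a : W ⟶ X} {b : W ⟶ Y} (w : a ≫ f = b ≫ g) {u : W ⟶ P}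
    (ha : u ≫ fst = a) (hb : u ≫ snd = b) : h.lift a b w = u :=
  h.hom_ext (by rw [h.lift_fst, ha]) (by rw [h.lift_snd, hb])

lemma lift_fst_snd {P X Y Z : C} {fst : P ⟶ X} {snd : P ⟶ Y} {f : X ⟶ Z}
    {g : Y ⟶ Z} (h : IsPullback fst snd f g) (w : fst ≫ f = snd ≫ g) : h.lift fst snd w = 𝟙 P :=
  h.lift_eq_of_comp_eq w (Category.id_comp _) (Category.id_comp _)

end CategoryTheory.IsPullback

section WideCospan

open WidePullbackShape

variable {J : Type*} {C' C'' : Type*} [Category C'] [Category C''] (F : C ⥤ C') {B : C}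
  {objs : J → C} (arrows : ∀ j, objs j ⟶ B)

def wideCospanCompIso :
    wideCospan B objs arrows ⋙ F ≅
      wideCospan (F.obj B) (fun j => F.obj (objs j)) (fun j => F.map (arrows j)) :=
  diagramIsoWideCospan _

lemma hasLimit_wideCospan_map [HasLimit (wideCospan B objs arrows)]
    [PreservesLimit (wideCospan B objs arrows) F] :
    HasLimit (wideCospan (F.obj B) (fun j => F.obj (objs j)) (fun j => F.map (arrows j))) :=
  hasLimit_of_iso (wideCospanCompIso F arrows)

lemma preservesLimit_wideCospan_map (G : C' ⥤ C'') [HasLimit (wideCospan B objs arrows)]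
    [PreservesLimit (wideCospan B objs arrows) F]
    [PreservesLimit (wideCospan B objs arrows) (F ⋙ G)] :
    PreservesLimit (wideCospan (F.obj B) (fun j => F.obj (objs j)) (fun j => F.map (arrows j)))
      G :=
  have : PreservesLimit (wideCospan B objs arrows ⋙ F) G :=
    preservesLimit_of_preserves_limit_cone (isLimitOfPreserves F (limit.isLimit _))
      (isLimitOfPreserves (F ⋙ G) (limit.isLimit _))
  preservesLimit_of_iso_diagram G (wideCospanCompIso F arrows)

lemma exists_comp_map_widePullback_π [HasWidePullback B objs arrows]
    [PreservesLimit (wideCospan B objs arrows) F] {X : C'} (b : X ⟶ F.obj B)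
    (fs : ∀ j, X ⟶ F.obj (objs j)) (w : ∀ j, fs j ≫ F.map (arrows j) = b) :
    ∃ u : X ⟶ F.obj (widePullback B objs arrows),
      ∀ j, u ≫ F.map (WidePullback.π arrows j) = fs j :=
  let hF := isLimitOfPreserves F (limit.isLimit (wideCospan B objs arrows))
  ⟨hF.lift (mkCone b fs w), fun j => hF.fac _ (some j)⟩

end WideCospan

namespace CategoryTheory.IsPullback

variable {C' : Type*} [Category C'] (F : C ⥤ C') {E M E₂ : C} {q : E ⟶ M} {p₀ p₁ : E₂ ⟶ E}
  {σ : E₂ ⟶ E}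

lemma map_add_comm (h₀ : IsPullback p₀ p₁ q q)
    (hF : IsPullback (F.map p₀) (F.map p₁) (F.map q) (F.map q))
    (comm : ∀ {X : C} (f g : X ⟶ E) (h : f ≫ q = g ≫ q),
      h₀.lift f g h ≫ σ = h₀.lift g f h.symm ≫ σ)
    {X : C'} (f g : X ⟶ F.obj E) (h : f ≫ F.map q = g ≫ F.map q) :
    hF.lift f g h ≫ F.map σ = hF.lift g f h.symm ≫ F.map σ := by
  have swap_σ : h₀.lift p₁ p₀ h₀.w.symm ≫ σ = σ := by
    rw [comm, h₀.lift_fst_snd, Category.id_comp]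
  have lift_swap : hF.lift g f h.symm = hF.lift f g h ≫ F.map (h₀.lift p₁ p₀ h₀.w.symm) :=
    hF.lift_eq_of_comp_eq _ (by rw [Category.assoc, ← F.map_comp, h₀.lift_fst, hF.lift_snd])
      (by rw [Category.assoc, ← F.map_comp, h₀.lift_snd, hF.lift_fst])
  rw [lift_swap, Category.assoc, ← F.map_comp, swap_σ]

lemma map_add_zero {ζ : M ⟶ E} (hζ : ζ ≫ q = 𝟙 M) (h₀ : IsPullback p₀ p₁ q q)
    (hF : IsPullback (F.map p₀) (F.map p₁) (F.map q) (F.map q))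
    (zero : ∀ {X : C} (f : X ⟶ E) (h : (f ≫ q ≫ ζ) ≫ q = f ≫ q),
      h₀.lift (f ≫ q ≫ ζ) f h ≫ σ = f)
    {X : C'} (f : X ⟶ F.obj E) (h : (f ≫ F.map q ≫ F.map ζ) ≫ F.map q = f ≫ F.map q) :
    hF.lift (f ≫ F.map q ≫ F.map ζ) f h ≫ F.map σ = f := by
  have w : (𝟙 E ≫ q ≫ ζ) ≫ q = 𝟙 E ≫ q := by simp [hζ]
  have lift_as_map :
      hF.lift (f ≫ F.map q ≫ F.map ζ) f h = f ≫ F.map (h₀.lift (𝟙 E ≫ q ≫ ζ) (𝟙 E) w) :=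
    hF.lift_eq_of_comp_eq _ (by rw [Category.assoc, ← F.map_comp, h₀.lift_fst]; simp)
      (by rw [Category.assoc, ← F.map_comp, h₀.lift_snd, F.map_id, Category.comp_id])
  rw [lift_as_map, Category.assoc, ← F.map_comp, zero, F.map_id, Category.comp_id]

lemma map_add_assoc (hσ : σ ≫ q = p₀ ≫ q) (h₀ : IsPullback p₀ p₁ q q)
    (hF : IsPullback (F.map p₀) (F.map p₁) (F.map q) (F.map q))
    [HasWidePullback M (fun _ : Fin 3 => E) (fun _ => q)]
    [PreservesLimit (WidePullbackShape.wideCospan M (fun _ : Fin 3 => E) (fun _ => q)) F]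
    (assoc : ∀ {X : C} (f g h : X ⟶ E) (hfg : f ≫ q = g ≫ q) (hgh : g ≫ q = h ≫ q)
      (h1 : (h₀.lift f g hfg ≫ σ) ≫ q = h ≫ q) (h2 : f ≫ q = (h₀.lift g h hgh ≫ σ) ≫ q),
      h₀.lift (h₀.lift f g hfg ≫ σ) h h1 ≫ σ = h₀.lift f (h₀.lift g h hgh ≫ σ) h2 ≫ σ)
    {X : C'} (f g h : X ⟶ F.obj E) (hfg : f ≫ F.map q = g ≫ F.map q)
    (hgh : g ≫ F.map q = h ≫ F.map q)
    (h1 : (hF.lift f g hfg ≫ F.map σ) ≫ F.map q = h ≫ F.map q)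
    (h2 : f ≫ F.map q = (hF.lift g h hgh ≫ F.map σ) ≫ F.map q) :
    hF.lift (hF.lift f g hfg ≫ F.map σ) h h1 ≫ F.map σ =
      hF.lift f (hF.lift g h hgh ≫ F.map σ) h2 ≫ F.map σ := by
  obtain ⟨u, hu⟩ := exists_comp_map_widePullback_π F (fun _ : Fin 3 => q) (f ≫ F.map q)
    ![f, g, h] (by intro j; fin_cases j <;> simp [hfg, hgh])
  let π := WidePullback.π (fun _ : Fin 3 => q)
  have hπ (i j : Fin 3) : π i ≫ q = π j ≫ q := by simp [π]
  have w₁ : (h₀.lift (π 0) (π 1) (hπ 0 1) ≫ σ) ≫ q = π 2 ≫ q := by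
    rw [Category.assoc, hσ, h₀.lift_fst_assoc, hπ]
  have w₂ : π 0 ≫ q = (h₀.lift (π 1) (π 2) (hπ 1 2) ≫ σ) ≫ q := by
    rw [Category.assoc, hσ, h₀.lift_fst_assoc, hπ]
  have e₀₁ : hF.lift f g hfg = u ≫ F.map (h₀.lift (π 0) (π 1) (hπ 0 1)) :=
    hF.lift_eq_of_comp_eq _ (by rw [Category.assoc, ← F.map_comp, h₀.lift_fst, hu]; rfl)
      (by rw [Category.assoc, ← F.map_comp, h₀.lift_snd, hu]; rfl)
  have e₁₂ : hF.lift g h hgh = u ≫ F.map (h₀.lift (π 1) (π 2) (hπ 1 2)) :=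
    hF.lift_eq_of_comp_eq _ (by rw [Category.assoc, ← F.map_comp, h₀.lift_fst, hu]; rfl)
      (by rw [Category.assoc, ← F.map_comp, h₀.lift_snd, hu]; rfl)
  have eₗ : hF.lift (hF.lift f g hfg ≫ F.map σ) h h1 = u ≫ F.map (h₀.lift _ (π 2) w₁) :=
    hF.lift_eq_of_comp_eq _ (by rw [Category.assoc, ← F.map_comp, h₀.lift_fst, F.map_comp, e₀₁,
        Category.assoc])
      (by rw [Category.assoc, ← F.map_comp, h₀.lift_snd, hu]; rfl)
  have eᵣ : hF.lift f (hF.lift g h hgh ≫ F.map σ) h2 = u ≫ F.map (h₀.lift (π 0) _ w₂) :=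
    hF.lift_eq_of_comp_eq _ (by rw [Category.assoc, ← F.map_comp, h₀.lift_fst, hu]; rfl)
      (by rw [Category.assoc, ← F.map_comp, h₀.lift_snd, F.map_comp, e₁₂, Category.assoc])
  rw [eₗ, eᵣ, Category.assoc, Category.assoc, ← F.map_comp, ← F.map_comp, assoc]

end CategoryTheory.IsPullback

namespace TangentStructure

variable (TS : TangentStructure C)

lemma c_naturality {X Y : C} (u : X ⟶ Y) :
    TS.T.map (TS.T.map u) ≫ TS.c.app Y = TS.c.app X ≫ TS.T.map (TS.T.map u) :=
  TS.c.naturality u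

@[simps]
def cIso (M : C) : TS.T.obj (TS.T.obj M) ≅ TS.T.obj (TS.T.obj M) where
  hom := TS.c.app M
  inv := TS.c.app M
  hom_inv_id := TS.c_c M
  inv_hom_id := TS.c_c M

lemma c_comp_l (M : C) : TS.c.app M ≫ TS.l.app (TS.T.obj M) =
    TS.T.map (TS.l.app M) ≫ TS.c.app (TS.T.obj M) ≫ TS.T.map (TS.c.app M) := by
  rw [← (TS.cIso M).cancel_iso_hom_left, cIso_hom]
  simp only [reassoc_of% TS.c_c, reassoc_of% TS.c_l]
  rw [← TS.T.map_comp, TS.c_c]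
  simp

variable {TS} {E M : C} {D : TS.DiffBundleData E M}

namespace IsPreDiffBundle

lemma isPB2 (hD : TS.IsPreDiffBundle D) :
    IsPullback (TS.T.map (TS.T.map D.p0)) (TS.T.map (TS.T.map D.p1))
      (TS.T.map (TS.T.map D.q)) (TS.T.map (TS.T.map D.q)) :=
  hD.isPBk 2

lemma tangent_lam_add0 (hD : TS.IsPreDiffBundle D) {X : C} (f g : X ⟶ TS.T.obj E)
    (h : f ≫ TS.T.map D.q = g ≫ TS.T.map D.q)
    (h' : (f ≫ TS.T.map D.lam ≫ TS.c.app E) ≫ TS.T.map (TS.T.map D.q) =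
      (g ≫ TS.T.map D.lam ≫ TS.c.app E) ≫ TS.T.map (TS.T.map D.q)) :
    hD.isPB1.lift f g h ≫ TS.T.map D.σ ≫ TS.T.map D.lam ≫ TS.c.app E =
      hD.isPB2.lift (f ≫ TS.T.map D.lam ≫ TS.c.app E) (g ≫ TS.T.map D.lam ≫ TS.c.app E) h' ≫
        TS.T.map (TS.T.map D.σ) := by
  have w : (D.p0 ≫ D.lam) ≫ TS.T.map D.q = (D.p1 ≫ D.lam) ≫ TS.T.map D.q := by
    simp only [Category.assoc, hD.lam_Tq, hD.isPB0.w_assoc]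
  have σ_lam : D.σ ≫ D.lam = hD.isPB1.lift (D.p0 ≫ D.lam) (D.p1 ≫ D.lam) w ≫ TS.T.map D.σ := by
    simpa [hD.isPB0.lift_fst_snd] using hD.lam_add0 D.p0 D.p1 hD.isPB0.w w
  have e : hD.isPB2.lift (f ≫ TS.T.map D.lam ≫ TS.c.app E) (g ≫ TS.T.map D.lam ≫ TS.c.app E) h' =
      hD.isPB1.lift f g h ≫ TS.T.map (hD.isPB1.lift _ _ w) ≫ TS.c.app D.E2 :=
    hD.isPB2.lift_eq_of_comp_eq _
      (by rw [Category.assoc, Category.assoc, ← TS.c_naturality, ← Functor.map_comp_assoc,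
        hD.isPB1.lift_fst, Functor.map_comp_assoc, hD.isPB1.lift_fst_assoc])
      (by rw [Category.assoc, Category.assoc, ← TS.c_naturality, ← Functor.map_comp_assoc,
        hD.isPB1.lift_snd, Functor.map_comp_assoc, hD.isPB1.lift_snd_assoc])
  rw [e, ← Functor.map_comp_assoc, σ_lam, Functor.map_comp_assoc, TS.c_naturality]
  simp only [Category.assoc]

lemma tangent_lam_add1 (hD : TS.IsPreDiffBundle D) {X : C} (f g : X ⟶ TS.T.obj E)
    (h : f ≫ TS.T.map D.q = g ≫ TS.T.map D.q)
    (h' : (f ≫ TS.T.map D.lam ≫ TS.c.app E) ≫ TS.p.app (TS.T.obj E) =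
      (g ≫ TS.T.map D.lam ≫ TS.c.app E) ≫ TS.p.app (TS.T.obj E)) :
    hD.isPB1.lift f g h ≫ TS.T.map D.σ ≫ TS.T.map D.lam ≫ TS.c.app E =
      (TS.isPB0 (TS.T.obj E)).lift (f ≫ TS.T.map D.lam ≫ TS.c.app E)
        (g ≫ TS.T.map D.lam ≫ TS.c.app E) h' ≫ TS.add.app (TS.T.obj E) := by
  have w : (D.p0 ≫ D.lam) ≫ TS.p.app E = (D.p1 ≫ D.lam) ≫ TS.p.app E := by
    simp only [Category.assoc, hD.lam_p, hD.isPB0.w_assoc]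
  have σ_lam : D.σ ≫ D.lam = (TS.isPB0 E).lift _ _ w ≫ TS.add.app E := by
    simpa [hD.isPB0.lift_fst_snd] using hD.lam_add1 D.p0 D.p1 hD.isPB0.w w
  have wT : TS.T.map (D.p0 ≫ D.lam) ≫ TS.T.map (TS.p.app E) =
      TS.T.map (D.p1 ≫ D.lam) ≫ TS.T.map (TS.p.app E) := by
    rw [← TS.T.map_comp, ← TS.T.map_comp, w]
  have wTc : (TS.T.map (D.p0 ≫ D.lam) ≫ TS.c.app E) ≫ TS.p.app (TS.T.obj E) =
      (TS.T.map (D.p1 ≫ D.lam) ≫ TS.c.app E) ≫ TS.p.app (TS.T.obj E) := by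
    rw [Category.assoc, Category.assoc, TS.c_p, wT]
  have map_lift : TS.T.map ((TS.isPB0 E).lift _ _ w) = (TS.isPB1 E).lift _ _ wT :=
    ((TS.isPB1 E).lift_eq_of_comp_eq _ (by rw [← TS.T.map_comp, IsPullback.lift_fst])
      (by rw [← TS.T.map_comp, IsPullback.lift_snd])).symm
  have e : (TS.isPB0 (TS.T.obj E)).lift (f ≫ TS.T.map D.lam ≫ TS.c.app E)
      (g ≫ TS.T.map D.lam ≫ TS.c.app E) h' =
        hD.isPB1.lift f g h ≫ (TS.isPB0 (TS.T.obj E)).lift _ _ wTc :=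
    (TS.isPB0 (TS.T.obj E)).lift_eq_of_comp_eq _
      (by rw [Category.assoc, IsPullback.lift_fst, TS.T.map_comp, Category.assoc,
        hD.isPB1.lift_fst_assoc])
      (by rw [Category.assoc, IsPullback.lift_snd, TS.T.map_comp, Category.assoc,
        hD.isPB1.lift_snd_assoc])
  rw [e, ← Functor.map_comp_assoc, σ_lam, Functor.map_comp_assoc, map_lift,
    TS.c_add _ _ wT wTc, Category.assoc]

lemma tangent (hD : TS.IsPreDiffBundle D) : TS.IsPreDiffBundle D.tangent where
  isPB0 := hD.isPB1
  isPB1 := hD.isPB2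
  isPBk k := (hD.isPBk (k + 1)).of_fpow_succ
  hasWide n :=
    have := hD.hasWide n
    have : PreservesLimit _ TS.T := hD.presWide n 1
    hasLimit_wideCospan_map TS.T _
  presWide n k :=
    have := hD.hasWide n
    have : PreservesLimit _ TS.T := hD.presWide n 1
    have : PreservesLimit _ (TS.T ⋙ fpow TS.T k) :=
      fpow_succ_eq_comp TS.T k ▸ hD.presWide n (k + 1)
    preservesLimit_wideCospan_map TS.T _ _
  σ_q := by
    dsimp only [DiffBundleData.tangent]
    rw [← TS.T.map_comp, hD.σ_q, TS.T.map_comp]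
  ζ_q := by
    dsimp only [DiffBundleData.tangent]
    rw [← TS.T.map_comp, hD.ζ_q, TS.T.map_id]
  σ_comm := hD.isPB0.map_add_comm TS.T hD.isPB1 hD.σ_comm
  σ_zero := hD.isPB0.map_add_zero TS.T hD.ζ_q hD.isPB1 hD.σ_zero
  σ_assoc :=
    have := hD.hasWide 3
    have : PreservesLimit _ TS.T := hD.presWide 3 1
    hD.isPB0.map_add_assoc TS.T hD.σ_q hD.isPB1 hD.σ_assoc
  lam_Tq := by
    dsimp only [DiffBundleData.tangent]
    rw [Category.assoc, ← TS.c_naturality, ← TS.T.map_comp_assoc, hD.lam_Tq,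
      TS.T.map_comp_assoc, TS.c_zero]
  lam_zero0 := by
    dsimp only [DiffBundleData.tangent]
    rw [← TS.T.map_comp_assoc, hD.lam_zero0, TS.T.map_comp_assoc, TS.c_naturality,
      ← TS.c_zero, Category.assoc]
  lam_add0 := hD.tangent_lam_add0
  lam_p := by
    dsimp only [DiffBundleData.tangent]
    rw [Category.assoc, TS.c_p, ← TS.T.map_comp, hD.lam_p, TS.T.map_comp]
  lam_zero1 := by
    dsimp only [DiffBundleData.tangent]
    rw [← TS.T.map_comp_assoc, hD.lam_zero1, TS.T.map_comp_assoc, TS.c_zero]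
  lam_add1 := hD.tangent_lam_add1
  lam_l := by
    dsimp only [DiffBundleData.tangent]
    rw [Category.assoc, TS.c_comp_l, ← TS.T.map_comp_assoc, hD.lam_l, TS.T.map_comp,
      TS.T.map_comp, Category.assoc, Category.assoc, reassoc_of% TS.c_naturality]

lemma mu_tangent (hD : TS.IsPreDiffBundle D) :
    D.tangent.mu hD.tangent = TS.T.map (D.mu hD) ≫ TS.c.app E := by
  have e : hD.isPB2.lift (TS.T.map D.p0 ≫ TS.T.map D.lam ≫ TS.c.app E)
      (TS.T.map D.p1 ≫ TS.zero.app (TS.T.obj E)) (mu_w hD.tangent) =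
        TS.T.map (hD.isPB1.lift _ _ (mu_w hD)) ≫ TS.c.app D.E2 :=
    hD.isPB2.lift_eq_of_comp_eq _
      (by rw [Category.assoc, ← TS.c_naturality, ← Functor.map_comp_assoc,
        hD.isPB1.lift_fst, Functor.map_comp_assoc])
      (by rw [Category.assoc, ← TS.c_naturality, ← Functor.map_comp_assoc,
        hD.isPB1.lift_snd, Functor.map_comp_assoc, TS.c_zero])
  change hD.isPB2.lift (TS.T.map D.p0 ≫ TS.T.map D.lam ≫ TS.c.app E)
    (TS.T.map D.p1 ≫ TS.zero.app (TS.T.obj E)) (mu_w hD.tangent) ≫ TS.T.map (TS.T.map D.σ) = _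
  rw [e, DiffBundleData.mu, Functor.map_comp_assoc, TS.c_naturality, Category.assoc]

end IsPreDiffBundle

lemma IsDiffBundle.tangent_univ (hD : TS.IsDiffBundle D) (k : ℕ) :
    IsPullback ((fpow TS.T k).map (D.tangent.mu hD.toIsPreDiffBundle.tangent))
      ((fpow TS.T k).map (TS.T.map D.p0 ≫ TS.T.map D.q))
      ((fpow TS.T k).map (TS.T.map (TS.T.map D.q)))
      ((fpow TS.T k).map (TS.zero.app (TS.T.obj M))) := by
  rw [hD.toIsPreDiffBundle.mu_tangent]
  show IsPullback ((fpow TS.T k).map (TS.T.map (D.mu hD.toIsPreDiffBundle) ≫ TS.c.app E))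
    ((fpow TS.T k).map (TS.T.map D.p0 ≫ TS.T.map D.q))
    ((fpow TS.T k).map (TS.T.map (TS.T.map D.q))) ((fpow TS.T k).map (TS.zero.app (TS.T.obj M)))
  refine (hD.univ (k + 1) (mu_w hD.toIsPreDiffBundle)).of_fpow_succ.of_iso (Iso.refl _)
    ((fpow TS.T k).mapIso (TS.cIso E)) (Iso.refl _) ((fpow TS.T k).mapIso (TS.cIso M))
    ?_ ?_ ?_ ?_
  all_goals simp [DiffBundleData.mu, ← Functor.map_comp, TS.c_naturality, TS.c_zero]

end TangentStructure

open TangentStructure in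
/-- If `q` is a differential bundle in a tangent category then so is
`T(q) = (T(q), T(σ), T(ζ), T(λ)c)`. -/
theorem tangent_of_diffBundle (TS : TangentStructure C) {E M : C}
    (D : TS.DiffBundleData E M) (hD : TS.IsDiffBundle D) :
    TS.IsDiffBundle D.tangent :=
  { toIsPreDiffBundle := hD.toIsPreDiffBundle.tangent
    univ := fun k _ => hD.tangent_univ k }
end

section
/- Let q = (q: E → M, σ, ζ, λ) be a differential bundle in a tangent category and f: X → M a map such that the pullback of the bundle q along f exists and is preserved by each Tⁿ (meaning: the pullbacks along f of all finite wide pullback powers of q exist and are preserved by each Tⁿ). Then f*(q) = (f*(q): f*(E) → X, f*(σ), f*(ζ), f*(λ)) — with f*(λ) the unique map induced into the pullback T(f*(E)) of T(q) along T(f) by f*_E·λ and f*(q)·0 — is a differential bundle, and the morphism (f*_E, f): f*(q) → q is a linear bundle morphism which is a cartesian morphism over f for the projection functor P: DBun(𝕏) → 𝕏 sending a differential bundle to its base object. -/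
open CategoryTheory CategoryTheory.Limits

universe v u

variable {C : Type u} [Category.{v} C]

section PullbackAux

theorem fpow_comm (T : C ⥤ C) : ∀ k : ℕ, T ⋙ fpow T k = fpow T k ⋙ T
  | 0 => rfl
  | (k+1) => by
      show (T ⋙ fpow T k) ⋙ T = (fpow T k ⋙ T) ⋙ T
      rw [fpow_comm T k]

theorem fpow_T_isPB (T : C ⥤ C) {P Q R S : C} {a : P ⟶ Q} {b : P ⟶ R} {c : Q ⟶ S} {d : R ⟶ S}
    (hk : ∀ k : ℕ, IsPullback ((fpow T k).map a) ((fpow T k).map b)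
      ((fpow T k).map c) ((fpow T k).map d)) (k : ℕ) :
    IsPullback ((fpow T k).map (T.map a)) ((fpow T k).map (T.map b))
      ((fpow T k).map (T.map c)) ((fpow T k).map (T.map d)) := by
  have h := hk (k+1)
  have e : fpow T (k+1) = T ⋙ fpow T k := (fpow_comm T k).symm
  rw [e] at h
  exact h

theorem lift_congr {P X Y Z W : C} {fst : P ⟶ X} {snd : P ⟶ Y} {f : X ⟶ Z} {g : Y ⟶ Z}
    (H : IsPullback fst snd f g) {a a' : W ⟶ X} {b b' : W ⟶ Y}
    (ha : a = a') (hb : b = b') (w : a ≫ f = b ≫ g) :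
    H.lift a b w = H.lift a' b' (by rw [← ha, ← hb]; exact w) := by
  subst ha; subst hb; rfl

theorem pb_lift_transfer {P' X' Y' W' P'' X'' Y'' W'' Z : C}
    {fst : P' ⟶ X'} {snd : P' ⟶ Y'} {f' : X' ⟶ W'} {g' : Y' ⟶ W'}
    {fst2 : P'' ⟶ X''} {snd2 : P'' ⟶ Y''} {f2 : X'' ⟶ W''} {g2 : Y'' ⟶ W''}
    (P : IsPullback fst snd f' g') (hB : IsPullback fst2 snd2 f2 g2)
    {m : P' ⟶ P''} {eX : X' ⟶ X''} {eY : Y' ⟶ Y''}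
    (h0 : fst ≫ eX = m ≫ fst2) (h1 : snd ≫ eY = m ≫ snd2)
    {a : Z ⟶ X'} {b : Z ⟶ Y'} (h : a ≫ f' = b ≫ g')
    (w : (a ≫ eX) ≫ f2 = (b ≫ eY) ≫ g2) :
    P.lift a b h ≫ m = hB.lift (a ≫ eX) (b ≫ eY) w := by
  apply hB.hom_ext
  · rw [Category.assoc, ← h0, ← Category.assoc, P.lift_fst, hB.lift_fst]
  · rw [Category.assoc, ← h1, ← Category.assoc, P.lift_snd, hB.lift_snd]

theorem pb_two {E M X Ef E2 E2f : C} {Q : E ⟶ M} {f : X ⟶ M} {fE : Ef ⟶ E} {qf : Ef ⟶ X}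
    {P0 P1 : E2 ⟶ E} {m2 : E2f ⟶ E2} {q2f : E2f ⟶ X} {p0f p1f : E2f ⟶ Ef}
    (hE : IsPullback fE qf Q f) (hE2 : IsPullback m2 q2f (P0 ≫ Q) f)
    (hB : IsPullback P0 P1 Q Q)
    (h0 : p0f ≫ fE = m2 ≫ P0) (h1 : p1f ≫ fE = m2 ≫ P1)
    (k0 : p0f ≫ qf = q2f) (k1 : p1f ≫ qf = q2f) :
    IsPullback p0f p1f qf qf := by
  have w : p0f ≫ qf = p1f ≫ qf := by rw [k0, k1]
  have wB : ∀ s : PullbackCone qf qf, (s.fst ≫ fE) ≫ Q = (s.snd ≫ fE) ≫ Q := by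
    intro s
    rw [Category.assoc, hE.w, Category.assoc, hE.w, ← Category.assoc, ← Category.assoc,
      s.condition]
  have w2 : ∀ s : PullbackCone qf qf,
      hB.lift (s.fst ≫ fE) (s.snd ≫ fE) (wB s) ≫ (P0 ≫ Q) = (s.fst ≫ qf) ≫ f := by
    intro s
    rw [← Category.assoc, hB.lift_fst, Category.assoc, hE.w, Category.assoc, ← Category.assoc]
  refine IsPullback.of_isLimit (PullbackCone.IsLimit.mk w
    (fun s => hE2.lift (hB.lift (s.fst ≫ fE) (s.snd ≫ fE) (wB s)) (s.fst ≫ qf) (w2 s))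
    (fun s => ?_) (fun s => ?_) (fun s m hm0 hm1 => ?_)
    )
  · apply hE.hom_ext
    · rw [Category.assoc, h0, ← Category.assoc, hE2.lift_fst, hB.lift_fst]
    · rw [Category.assoc, k0, hE2.lift_snd]
  · apply hE.hom_ext
    · rw [Category.assoc, h1, ← Category.assoc, hE2.lift_fst, hB.lift_snd]
    · rw [Category.assoc, k1, hE2.lift_snd, PullbackCone.condition]
  · apply hE2.hom_ext
    · rw [hE2.lift_fst]
      apply hB.hom_ext
      · rw [Category.assoc, ← h0, ← Category.assoc, hm0, hB.lift_fst]
      · rw [Category.assoc, ← h1, ← Category.assoc, hm1, hB.lift_snd]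
    · rw [hE2.lift_snd, ← k0, ← Category.assoc, hm0]

end PullbackAux

open TangentStructure in
/-- the pullback of a differential bundle `q` along `f : X ⟶ M` (assumed to
exist and be preserved by each `Tⁿ`, for `q` itself and for its wide pullback powers) is
again a differential bundle `f*(q)`, and `(f*_E, f) : f*(q) ⟶ q` is a linear bundle
morphism which is cartesian over `f` for the projection `P : DBun(𝕏) ⟶ 𝕏`. -/
theorem pullback_diffBundle (TS : TangentStructure C) {E M X : C}
    (D : TS.DiffBundleData E M) (hD : TS.IsDiffBundle D) (f : X ⟶ M)
    -- the pullback of `q : E ⟶ M` along `f`, preserved by every `Tⁿ`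
    (Ef : C) (fE : Ef ⟶ E) (qf : Ef ⟶ X)
    (hE0 : IsPullback fE qf D.q f)
    (hEk : ∀ k : ℕ, IsPullback ((fpow TS.T k).map fE) ((fpow TS.T k).map qf)
      ((fpow TS.T k).map D.q) ((fpow TS.T k).map f))
    -- the pullback of the second wide pullback power of `q` along `f`, preserved by `Tⁿ`
    (E2f : C) (m2 : E2f ⟶ D.E2) (q2f : E2f ⟶ X) (p0f p1f : E2f ⟶ Ef)
    (hE20 : IsPullback m2 q2f (D.p0 ≫ D.q) f)
    (hE2k : ∀ k : ℕ, IsPullback ((fpow TS.T k).map m2) ((fpow TS.T k).map q2f)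
      ((fpow TS.T k).map (D.p0 ≫ D.q)) ((fpow TS.T k).map f))
    (hp0f : p0f ≫ fE = m2 ≫ D.p0) (hp1f : p1f ≫ fE = m2 ≫ D.p1)
    (hq0f : p0f ≫ qf = q2f) (hq1f : p1f ≫ qf = q2f)
    -- pullbacks along `f` of all the wide pullback powers of `q` exist and are
    -- preserved by every `Tⁿ` (expressed for the pulled-back bundle)
    (hW : ∀ n : ℕ,
      HasLimit (WidePullbackShape.wideCospan X (fun _ : Fin n => Ef) (fun _ => qf)))
    (hWp : ∀ n k : ℕ,
      PreservesLimit (WidePullbackShape.wideCospan X (fun _ : Fin n => Ef) (fun _ => qf))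
        (fpow TS.T k)) :
    ∃ (σf : E2f ⟶ Ef) (ζf : X ⟶ Ef) (lamf : Ef ⟶ TS.T.obj Ef),
      -- `f*(σ)`, `f*(ζ)` and `f*(λ)` are the maps induced into the pullbacks:
      σf ≫ fE = m2 ≫ D.σ ∧ σf ≫ qf = q2f ∧
      ζf ≫ fE = f ≫ D.ζ ∧ ζf ≫ qf = 𝟙 X ∧
      lamf ≫ TS.T.map fE = fE ≫ D.lam ∧ lamf ≫ TS.T.map qf = qf ≫ TS.zero.app X ∧
      -- `f*(q)` is a differential bundle:
      TS.IsDiffBundle ⟨qf, E2f, p0f, p1f, σf, ζf, lamf⟩ ∧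
      -- `(f*_E, f)` is a linear bundle morphism `f*(q) ⟶ q`:
      IsLinearBundleHom (⟨qf, E2f, p0f, p1f, σf, ζf, lamf⟩ : TS.DiffBundleData Ef X) D fE f ∧
      -- and it is a cartesian morphism over `f` for `P : DBun(𝕏) ⟶ 𝕏`:
      (∀ (E'' M'' : C) (D'' : TS.DiffBundleData E'' M'') (_ : TS.IsDiffBundle D'')
        (u : E'' ⟶ E) (v : M'' ⟶ M), u ≫ D.q = D''.q ≫ v →
        ∀ (v' : M'' ⟶ X), v' ≫ f = v →
          ∃! u' : E'' ⟶ Ef, u' ≫ fE = u ∧ u' ≫ qf = D''.q ≫ v') := by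
  -- naturality helpers
  have znat : ∀ {A B : C} (g : A ⟶ B), g ≫ TS.zero.app B = TS.zero.app A ≫ TS.T.map g :=
    fun {A B} g => by simpa using TS.zero.naturality g
  have pnat : ∀ {A B : C} (g : A ⟶ B), TS.T.map g ≫ TS.p.app B = TS.p.app A ≫ g :=
    fun {A B} g => by simpa using TS.p.naturality g
  have lnat : ∀ {A B : C} (g : A ⟶ B),
      TS.T.map g ≫ TS.l.app B = TS.l.app A ≫ TS.T.map (TS.T.map g) :=
    fun {A B} g => by simpa using TS.l.naturality g
  have anat : ∀ {A B : C} (g : A ⟶ B),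
      TS.T2.map g ≫ TS.add.app B = TS.add.app A ≫ TS.T.map g :=
    fun {A B} g => TS.add.naturality g
  have PB1T : IsPullback (TS.T.map fE) (TS.T.map qf) (TS.T.map D.q) (TS.T.map f) := hEk 1
  have PB2T : IsPullback (TS.T.map (TS.T.map fE)) (TS.T.map (TS.T.map qf))
      (TS.T.map (TS.T.map D.q)) (TS.T.map (TS.T.map f)) := hEk 2
  -- the three structural maps
  have wσ : (m2 ≫ D.σ) ≫ D.q = q2f ≫ f := by
    rw [Category.assoc, hD.σ_q]; exact hE20.w
  set σf : E2f ⟶ Ef := hE0.lift (m2 ≫ D.σ) q2f wσ with hσfdef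
  have sfE : σf ≫ fE = m2 ≫ D.σ := hE0.lift_fst _ _ _
  have sqf : σf ≫ qf = q2f := hE0.lift_snd _ _ _
  have wζ : (f ≫ D.ζ) ≫ D.q = 𝟙 X ≫ f := by
    rw [Category.assoc, hD.ζ_q, Category.comp_id, Category.id_comp]
  set ζf : X ⟶ Ef := hE0.lift (f ≫ D.ζ) (𝟙 X) wζ with hζfdef
  have zfE : ζf ≫ fE = f ≫ D.ζ := hE0.lift_fst _ _ _
  have zqf : ζf ≫ qf = 𝟙 X := hE0.lift_snd _ _ _
  have wlam : (fE ≫ D.lam) ≫ TS.T.map D.q = (qf ≫ TS.zero.app X) ≫ TS.T.map f := by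
    rw [Category.assoc, hD.lam_Tq, Category.assoc, ← znat f, ← Category.assoc,
      ← Category.assoc, hE0.w]
  set lamf : Ef ⟶ TS.T.obj Ef := PB1T.lift (fE ≫ D.lam) (qf ≫ TS.zero.app X) wlam with hlamfdef
  have lfE : lamf ≫ TS.T.map fE = fE ≫ D.lam := PB1T.lift_fst _ _ _
  have lqf : lamf ≫ TS.T.map qf = qf ≫ TS.zero.app X := PB1T.lift_snd _ _ _
  -- the pullback structure on E2f
  have ww : ∀ {Z : C} {a b : Z ⟶ Ef}, a ≫ qf = b ≫ qf →
      (a ≫ fE) ≫ D.q = (b ≫ fE) ≫ D.q := by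
    intro Z a b h
    rw [Category.assoc, hE0.w, Category.assoc, hE0.w, ← Category.assoc, ← Category.assoc, h]
  have wwT : ∀ {Z : C} {a b : Z ⟶ TS.T.obj Ef}, a ≫ TS.T.map qf = b ≫ TS.T.map qf →
      (a ≫ TS.T.map fE) ≫ TS.T.map D.q = (b ≫ TS.T.map fE) ≫ TS.T.map D.q := by
    intro Z a b h
    have e : TS.T.map fE ≫ TS.T.map D.q = TS.T.map qf ≫ TS.T.map f := by
      rw [← Functor.map_comp, ← Functor.map_comp, hE0.w]
    rw [Category.assoc, Category.assoc, e, ← Category.assoc, ← Category.assoc, h]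
  have newPB0 : IsPullback p0f p1f qf qf := pb_two hE0 hE20 hD.isPB0 hp0f hp1f hq0f hq1f
  have newPBk : ∀ k : ℕ, IsPullback ((fpow TS.T k).map p0f) ((fpow TS.T k).map p1f)
      ((fpow TS.T k).map qf) ((fpow TS.T k).map qf) := by
    intro k
    have h2 := hE2k k
    rw [Functor.map_comp] at h2
    exact pb_two (hEk k) h2 (hD.isPBk k)
      (by rw [← Functor.map_comp, ← Functor.map_comp, hp0f])
      (by rw [← Functor.map_comp, ← Functor.map_comp, hp1f])
      (by rw [← Functor.map_comp, hq0f])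
      (by rw [← Functor.map_comp, hq1f])
  have newPB1 : IsPullback (TS.T.map p0f) (TS.T.map p1f) (TS.T.map qf) (TS.T.map qf) :=
    newPBk 1
  -- lift transfer lemmas
  have Lq2 : ∀ {Z : C} (a b : Z ⟶ Ef) (h : a ≫ qf = b ≫ qf),
      newPB0.lift a b h ≫ q2f = a ≫ qf := by
    intro Z a b h
    rw [← hq0f, ← Category.assoc, newPB0.lift_fst]
  have LTq2 : ∀ {Z : C} (a b : Z ⟶ TS.T.obj Ef) (h : a ≫ TS.T.map qf = b ≫ TS.T.map qf),
      newPB1.lift a b h ≫ TS.T.map q2f = a ≫ TS.T.map qf := by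
    intro Z a b h
    rw [← hq0f, Functor.map_comp, ← Category.assoc, newPB1.lift_fst]
  have Lσ_fE : ∀ {Z : C} (a b : Z ⟶ Ef) (h : a ≫ qf = b ≫ qf),
      newPB0.lift a b h ≫ σf ≫ fE = hD.isPB0.lift (a ≫ fE) (b ≫ fE) (ww h) ≫ D.σ := by
    intro Z a b h
    rw [sfE, ← Category.assoc, pb_lift_transfer newPB0 hD.isPB0 hp0f hp1f h (ww h)]
  have Lσ_qf : ∀ {Z : C} (a b : Z ⟶ Ef) (h : a ≫ qf = b ≫ qf),
      newPB0.lift a b h ≫ σf ≫ qf = a ≫ qf := by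
    intro Z a b h
    rw [sqf, Lq2]
  have hTp0f : TS.T.map p0f ≫ TS.T.map fE = TS.T.map m2 ≫ TS.T.map D.p0 := by
    rw [← Functor.map_comp, ← Functor.map_comp, hp0f]
  have hTp1f : TS.T.map p1f ≫ TS.T.map fE = TS.T.map m2 ≫ TS.T.map D.p1 := by
    rw [← Functor.map_comp, ← Functor.map_comp, hp1f]
  have LTm2 : ∀ {Z : C} (a b : Z ⟶ TS.T.obj Ef) (h : a ≫ TS.T.map qf = b ≫ TS.T.map qf)
      (w : (a ≫ TS.T.map fE) ≫ TS.T.map D.q = (b ≫ TS.T.map fE) ≫ TS.T.map D.q),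
      newPB1.lift a b h ≫ TS.T.map m2 =
        hD.isPB1.lift (a ≫ TS.T.map fE) (b ≫ TS.T.map fE) w := by
    intro Z a b h w
    exact pb_lift_transfer newPB1 hD.isPB1 hTp0f hTp1f h w
  have LT2nat : ∀ {A B : C} (g : A ⟶ B) {Z : C} (a b : Z ⟶ TS.T.obj A)
      (h : a ≫ TS.p.app A = b ≫ TS.p.app A)
      (w : (a ≫ TS.T.map g) ≫ TS.p.app B = (b ≫ TS.T.map g) ≫ TS.p.app B),
      (TS.isPB0 A).lift a b h ≫ TS.T2.map g =
        (TS.isPB0 B).lift (a ≫ TS.T.map g) (b ≫ TS.T.map g) w := by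
    intro A B g Z a b h w
    exact pb_lift_transfer (TS.isPB0 A) (TS.isPB0 B)
      (TS.π0.naturality g).symm (TS.π1.naturality g).symm h w
  refine ⟨σf, ζf, lamf, sfE, sqf, zfE, zqf, lfE, lqf, ⟨?_, ?_⟩, ⟨hE0.w, lfE.symm⟩, ?_⟩
  · -- IsPreDiffBundle
    refine ⟨newPB0, newPB1, newPBk, hW, hWp, ?_, zqf, ?_, ?_, ?_, lqf, ?_, ?_, ?_, ?_, ?_, ?_⟩
    · -- σ_q
      show σf ≫ qf = p0f ≫ qf
      rw [sqf, hq0f]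
    · -- σ_comm
      intro Z a b h
      apply hE0.hom_ext
      · rw [Category.assoc, Category.assoc, Lσ_fE, Lσ_fE]
        exact hD.σ_comm _ _ (ww h)
      · rw [Category.assoc, Category.assoc, Lσ_qf, Lσ_qf]
        exact h
    · -- σ_zero
      intro Z a h
      show newPB0.lift (a ≫ qf ≫ ζf) a h ≫ σf = a
      apply hE0.hom_ext
      · rw [Category.assoc, Lσ_fE]
        have e : (a ≫ qf ≫ ζf) ≫ fE = (a ≫ fE) ≫ D.q ≫ D.ζ := by
          simp only [Category.assoc, zfE, reassoc_of% hE0.w]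
        rw [lift_congr hD.isPB0 e rfl]
        exact hD.σ_zero (a ≫ fE) _
      · rw [Category.assoc, Lσ_qf, Category.assoc, Category.assoc, zqf, Category.comp_id]
    · -- σ_assoc
      intro Z a b c hab hbc h1 h2
      apply hE0.hom_ext
      · rw [Category.assoc, Category.assoc, Lσ_fE, Lσ_fE]
        have eA : (newPB0.lift a b hab ≫ σf) ≫ fE =
            hD.isPB0.lift (a ≫ fE) (b ≫ fE) (ww hab) ≫ D.σ := by
          rw [Category.assoc, Lσ_fE]
        have eB : (newPB0.lift b c hbc ≫ σf) ≫ fE =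
            hD.isPB0.lift (b ≫ fE) (c ≫ fE) (ww hbc) ≫ D.σ := by
          rw [Category.assoc, Lσ_fE]
        rw [lift_congr hD.isPB0 eA rfl, lift_congr hD.isPB0 rfl eB]
        exact hD.σ_assoc _ _ _ _ _ _ _
      · rw [Category.assoc, Lσ_qf, Category.assoc, Lσ_qf, Category.assoc, Lσ_qf]
    · -- lam_zero0
      show ζf ≫ lamf = TS.zero.app X ≫ TS.T.map ζf
      apply PB1T.hom_ext
      · rw [Category.assoc, lfE, ← Category.assoc, zfE, Category.assoc, hD.lam_zero0,
          Category.assoc, ← Functor.map_comp, zfE, Functor.map_comp, ← Category.assoc,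
          znat f, Category.assoc]
      · rw [Category.assoc, lqf, ← Category.assoc, zqf, Category.id_comp,
          Category.assoc, ← Functor.map_comp, zqf, CategoryTheory.Functor.map_id,
          Category.comp_id]
    · -- lam_add0
      intro Z a b h h'
      show newPB0.lift a b h ≫ σf ≫ lamf =
        newPB1.lift (a ≫ lamf) (b ≫ lamf) h' ≫ TS.T.map σf
      have e1 : (a ≫ lamf) ≫ TS.T.map fE = (a ≫ fE) ≫ D.lam := by
        rw [Category.assoc, lfE, ← Category.assoc]
      have e2 : (b ≫ lamf) ≫ TS.T.map fE = (b ≫ fE) ≫ D.lam := by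
        rw [Category.assoc, lfE, ← Category.assoc]
      apply PB1T.hom_ext
      · simp only [Category.assoc]
        rw [lfE, reassoc_of% (Lσ_fE a b h),
          hD.lam_add0 (a ≫ fE) (b ≫ fE) (ww h) (by rw [← e1, ← e2]; exact wwT h'),
          ← Functor.map_comp, sfE, Functor.map_comp, ← Category.assoc,
          LTm2 _ _ h' (wwT h'), lift_congr hD.isPB1 e1 e2]
      · simp only [Category.assoc]
        rw [lqf, reassoc_of% (Lσ_qf a b h), ← Functor.map_comp, sqf, LTq2 _ _ h',
          Category.assoc, lqf]
    · -- lam_p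
      show lamf ≫ TS.p.app Ef = qf ≫ ζf
      apply hE0.hom_ext
      · simp only [Category.assoc]
        rw [← pnat fE, reassoc_of% lfE, hD.lam_p, reassoc_of% hE0.w, zfE]
      · simp only [Category.assoc]
        rw [← pnat qf, reassoc_of% lqf, TS.zero_p, zqf, Category.comp_id]
    · -- lam_zero1
      show ζf ≫ lamf = ζf ≫ TS.zero.app Ef
      apply PB1T.hom_ext
      · simp only [Category.assoc]
        rw [lfE, reassoc_of% zfE, hD.lam_zero1, ← znat fE, reassoc_of% zfE]
      · simp only [Category.assoc]
        rw [lqf, ← znat qf]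
    · -- lam_add1
      intro Z a b h h'
      show newPB0.lift a b h ≫ σf ≫ lamf =
        (TS.isPB0 Ef).lift (a ≫ lamf) (b ≫ lamf) h' ≫ TS.add.app Ef
      have h2 : (a ≫ lamf) ≫ TS.p.app Ef = (b ≫ lamf) ≫ TS.p.app Ef := h'
      apply PB1T.hom_ext
      · have e1 : a ≫ lamf ≫ TS.T.map fE = (a ≫ fE) ≫ D.lam := by
          rw [lfE, ← Category.assoc]
        have e2 : b ≫ lamf ≫ TS.T.map fE = (b ≫ fE) ≫ D.lam := by
          rw [lfE, ← Category.assoc]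
        simp only [Category.assoc]
        rw [lfE, reassoc_of% (Lσ_fE a b h),
          hD.lam_add1 (a ≫ fE) (b ≫ fE) (ww h)
            (by simp only [Category.assoc, hD.lam_p, reassoc_of% hE0.w, reassoc_of% h]),
          ← anat fE,
          reassoc_of% (LT2nat fE (a ≫ lamf) (b ≫ lamf) h2
            (by simp only [Category.assoc, pnat fE, reassoc_of% h2])),
          lift_congr (TS.isPB0 E) e1 e2]
      · simp only [Category.assoc]
        rw [lqf, reassoc_of% (Lσ_qf a b h), ← anat qf,
          reassoc_of% (LT2nat qf (a ≫ lamf) (b ≫ lamf) h2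
            (by simp only [Category.assoc, pnat qf, reassoc_of% h2]))]
        have e1 : a ≫ lamf ≫ TS.T.map qf =
            ((b ≫ qf) ≫ TS.zero.app X) ≫ TS.p.app X ≫ TS.zero.app X := by
          simp only [Category.assoc, lqf, reassoc_of% h, reassoc_of% (TS.zero_p X)]
        have e2 : b ≫ lamf ≫ TS.T.map qf = (b ≫ qf) ≫ TS.zero.app X := by
          simp only [Category.assoc, lqf, ← Category.assoc]
        rw [lift_congr (TS.isPB0 X) e1 e2, TS.add_zero ((b ≫ qf) ≫ TS.zero.app X)]
        simp only [Category.assoc, reassoc_of% h]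
    · -- lam_l
      show lamf ≫ TS.l.app Ef = lamf ≫ TS.T.map lamf
      apply PB2T.hom_ext
      · simp only [Category.assoc]
        rw [← lnat fE, reassoc_of% lfE, hD.lam_l, ← Functor.map_comp, lfE,
          Functor.map_comp, reassoc_of% lfE]
      · simp only [Category.assoc]
        rw [← lnat qf, reassoc_of% lqf, TS.l_zero, ← Functor.map_comp, lqf,
          Functor.map_comp, reassoc_of% lqf]
  · -- univ
    intro k h
    have h3 : (p0f ≫ lamf) ≫ TS.T.map qf = (p1f ≫ TS.zero.app Ef) ≫ TS.T.map qf := h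
    set μD : D.E2 ⟶ TS.T.obj E :=
      hD.isPB1.lift (D.p0 ≫ D.lam) (D.p1 ≫ TS.zero.app E)
        (mu_w hD.toIsPreDiffBundle) ≫ TS.T.map D.σ with hμDdef
    set μf : E2f ⟶ TS.T.obj Ef :=
      newPB1.lift (p0f ≫ lamf) (p1f ≫ TS.zero.app Ef) h3 ≫ TS.T.map σf with hμfdef
    have hμ : μf ≫ TS.T.map fE = m2 ≫ μD := by
      rw [hμfdef, hμDdef]
      simp only [Category.assoc]
      rw [← Functor.map_comp, sfE, Functor.map_comp, ← Category.assoc,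
        LTm2 _ _ h3 (wwT h3)]
      have e : hD.isPB1.lift ((p0f ≫ lamf) ≫ TS.T.map fE)
          ((p1f ≫ TS.zero.app Ef) ≫ TS.T.map fE) (wwT h3) =
          m2 ≫ hD.isPB1.lift (D.p0 ≫ D.lam) (D.p1 ≫ TS.zero.app E)
            (mu_w hD.toIsPreDiffBundle) := by
        apply hD.isPB1.hom_ext
        · simp only [Category.assoc, IsPullback.lift_fst, IsPullback.lift_fst_assoc,
            lfE, reassoc_of% hp0f]
        · simp only [Category.assoc, IsPullback.lift_snd, IsPullback.lift_snd_assoc,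
            ← znat fE, reassoc_of% hp1f]
      rw [e, Category.assoc]
    have hμq : μf ≫ TS.T.map qf = (p0f ≫ qf) ≫ TS.zero.app X := by
      rw [hμfdef]
      simp only [Category.assoc]
      rw [← Functor.map_comp, sqf, LTq2 _ _ h3, Category.assoc, lqf, ← Category.assoc]
    -- the big pasted rectangle
    have hu := hD.univ k (mu_w hD.toIsPreDiffBundle)
    have rect := (hE2k k).paste_horiz hu
    have R := fpow_T_isPB TS.T hEk k
    have s : IsPullback ((fpow TS.T k).map μf ≫ (fpow TS.T k).map (TS.T.map fE))
        ((fpow TS.T k).map (p0f ≫ qf)) ((fpow TS.T k).map (TS.T.map D.q))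
        ((fpow TS.T k).map (TS.zero.app X) ≫ (fpow TS.T k).map (TS.T.map f)) := by
      have e1 : (fpow TS.T k).map μf ≫ (fpow TS.T k).map (TS.T.map fE) =
          (fpow TS.T k).map m2 ≫ (fpow TS.T k).map μD := by
        rw [← Functor.map_comp, ← Functor.map_comp, hμ]
      have e2 : (fpow TS.T k).map (p0f ≫ qf) = (fpow TS.T k).map q2f := by
        rw [hq0f]
      have e3 : (fpow TS.T k).map (TS.zero.app X) ≫ (fpow TS.T k).map (TS.T.map f) =
          (fpow TS.T k).map f ≫ (fpow TS.T k).map (TS.zero.app M) := by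
        rw [← Functor.map_comp, ← Functor.map_comp, ← znat f]
      rw [e1, e2, e3]
      exact rect
    have pcomm : (fpow TS.T k).map μf ≫ (fpow TS.T k).map (TS.T.map qf) =
        (fpow TS.T k).map (p0f ≫ qf) ≫ (fpow TS.T k).map (TS.zero.app X) := by
      rw [← Functor.map_comp, ← Functor.map_comp, hμq]
    exact IsPullback.of_right s pcomm R
  · -- cartesian
    intro E'' M'' D'' _ u v huv v' hv'
    have wu : u ≫ D.q = (D''.q ≫ v') ≫ f := by
      rw [Category.assoc, hv']; exact huv
    refine ⟨hE0.lift u (D''.q ≫ v') wu, ⟨hE0.lift_fst _ _ _, hE0.lift_snd _ _ _⟩, ?_⟩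
    rintro y ⟨hy1, hy2⟩
    apply hE0.hom_ext
    · rw [hy1, hE0.lift_fst]
    · rw [hy2, hE0.lift_snd]
end

section
/- In the presence of the other axioms for a differential bundle q in a tangent category, the universality of the lift (the square with top μ := ⟨π₀λ, π₁0⟩T(σ): E₂ → TE, left leg π₀q, right leg T(q), bottom 0: M → TM being a pullback) is equivalent to each of the following: (i) E₂ →^μ TE is the equalizer of T(q) and pq0: TE → TM; (ii) for every map f: X → TE with fT(q) = fpq0 there is a unique map {f}: X → E such that f = ⟨{f}λ, fp0⟩T(σ). -/
open CategoryTheory CategoryTheory.Limits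

universe v u

variable {C : Type u} [Category.{v} C]

section Helpers

open TangentStructure

variable {TS : TangentStructure C} {E M : C} {D : TS.DiffBundleData E M}

lemma zero_nat' {X Y : C} (f : X ⟶ Y) :
    TS.zero.app X ≫ TS.T.map f = f ≫ TS.zero.app Y := by
  simpa using (TS.zero.naturality f).symm

lemma p_nat' {X Y : C} (f : X ⟶ Y) :
    TS.T.map f ≫ TS.p.app Y = TS.p.app X ≫ f := by
  simpa using TS.p.naturality f

lemma mu_def (hD : TS.IsPreDiffBundle D) :
    D.mu hD = hD.isPB1.lift (D.p0 ≫ D.lam) (D.p1 ≫ TS.zero.app E) (mu_w hD) ≫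
      TS.T.map D.σ := rfl

lemma mu_Tq (hD : TS.IsPreDiffBundle D) :
    D.mu hD ≫ TS.T.map D.q = (D.p0 ≫ D.q) ≫ TS.zero.app M := by
  rw [mu_def, Category.assoc, ← TS.T.map_comp, hD.σ_q, TS.T.map_comp, ← Category.assoc,
    hD.isPB1.lift_fst, Category.assoc, hD.lam_Tq, ← Category.assoc]

lemma mu_p (hD : TS.IsPreDiffBundle D) :
    D.mu hD ≫ TS.p.app E = D.p1 := by
  rw [mu_def, Category.assoc, p_nat' D.σ, ← Category.assoc]
  have h1 : (hD.isPB1.lift (D.p0 ≫ D.lam) (D.p1 ≫ TS.zero.app E) (mu_w hD) ≫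
      TS.p.app D.E2) = hD.isPB0.lift (D.p1 ≫ D.q ≫ D.ζ) D.p1
        (by simp [hD.ζ_q]) := by
    apply hD.isPB0.hom_ext
    · rw [hD.isPB0.lift_fst, Category.assoc, ← p_nat' D.p0, ← Category.assoc,
        hD.isPB1.lift_fst, Category.assoc, hD.lam_p, ← Category.assoc, hD.isPB0.w,
        Category.assoc]
    · rw [hD.isPB0.lift_snd, Category.assoc, ← p_nat' D.p1, ← Category.assoc,
        hD.isPB1.lift_snd, Category.assoc, TS.zero_p, Category.comp_id]
  rw [h1, hD.σ_zero]

lemma brw (hD : TS.IsPreDiffBundle D) {X : C} {f : X ⟶ TS.T.obj E} {b : X ⟶ E}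
    (hb : b ≫ D.q = (f ≫ TS.p.app E) ≫ D.q) :
    (b ≫ D.lam) ≫ TS.T.map D.q =
      (f ≫ TS.p.app E ≫ TS.zero.app E) ≫ TS.T.map D.q := by
  rw [Category.assoc, hD.lam_Tq, Category.assoc, Category.assoc, zero_nat' D.q,
    ← Category.assoc, ← Category.assoc, hb, Category.assoc]

lemma bq_of_bracket (hD : TS.IsPreDiffBundle D) {X : C} {f : X ⟶ TS.T.obj E} {b : X ⟶ E}
    (hb : IsBracket D hD.isPB1 f b) :
    b ≫ D.q = (f ≫ TS.p.app E) ≫ D.q := by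
  obtain ⟨w, -⟩ := hb
  have := w
  rw [Category.assoc, hD.lam_Tq, Category.assoc, Category.assoc, zero_nat' D.q] at this
  have h2 := congrArg (fun t => t ≫ TS.p.app M) this
  simp only [Category.assoc, TS.zero_p, Category.comp_id] at h2
  rw [h2, Category.assoc]

lemma lift_mu (hD : TS.IsPreDiffBundle D) {X : C} (f : X ⟶ TS.T.obj E) (b : X ⟶ E)
    (hb : b ≫ D.q = (f ≫ TS.p.app E) ≫ D.q) :
    hD.isPB0.lift b (f ≫ TS.p.app E) hb ≫ D.mu hD =
      hD.isPB1.lift (b ≫ D.lam) (f ≫ TS.p.app E ≫ TS.zero.app E) (brw hD hb) ≫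
        TS.T.map D.σ := by
  rw [mu_def, ← Category.assoc]
  congr 1
  apply hD.isPB1.hom_ext
  · rw [Category.assoc, hD.isPB1.lift_fst, hD.isPB1.lift_fst, ← Category.assoc,
      hD.isPB0.lift_fst]
  · rw [Category.assoc, hD.isPB1.lift_snd, hD.isPB1.lift_snd, ← Category.assoc,
      hD.isPB0.lift_snd, Category.assoc]

lemma mu_bracket (hD : TS.IsPreDiffBundle D) {X : C} (u : X ⟶ D.E2) :
    IsBracket D hD.isPB1 (u ≫ D.mu hD) (u ≫ D.p0) := by
  have hp : (u ≫ D.mu hD) ≫ TS.p.app E = u ≫ D.p1 := by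
    rw [Category.assoc, mu_p hD]
  have hb : (u ≫ D.p0) ≫ D.q = ((u ≫ D.mu hD) ≫ TS.p.app E) ≫ D.q := by
    rw [hp, Category.assoc, Category.assoc, hD.isPB0.w]
  refine ⟨brw hD hb, ?_⟩
  have hu : hD.isPB0.lift (u ≫ D.p0) ((u ≫ D.mu hD) ≫ TS.p.app E) hb = u := by
    apply hD.isPB0.hom_ext
    · rw [hD.isPB0.lift_fst]
    · rw [hD.isPB0.lift_snd, hp]
  have h3 := lift_mu hD (u ≫ D.mu hD) (u ≫ D.p0) hb
  rw [hu] at h3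
  exact h3

lemma bracket_lift_mu (hD : TS.IsPreDiffBundle D) {X : C} {f : X ⟶ TS.T.obj E} {b : X ⟶ E}
    (hb : IsBracket D hD.isPB1 f b) :
    hD.isPB0.lift b (f ≫ TS.p.app E) (bq_of_bracket hD hb) ≫ D.mu hD = f := by
  obtain ⟨w, hw⟩ := hb
  rw [lift_mu hD f b (bq_of_bracket hD ⟨w, hw⟩)]
  exact hw.symm

end Helpers

open TangentStructure in
/-- in the presence of the other axioms for a differential bundle, the
universality of the lift (the square on `μ` being a pullback) is equivalent to
(i) `μ` being the equalizer of `T(q)` and `pq0`, and to (ii) the unique existence of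
the bracket `{f}` for every `f` equalizing `T(q)` and `pq0`. -/
theorem universality_iff_equalizer_iff_bracket (TS : TangentStructure C) {E M : C}
    (D : TS.DiffBundleData E M) (hD : TS.IsPreDiffBundle D) :
    (IsPullback (D.mu hD) (D.p0 ≫ D.q) (TS.T.map D.q) (TS.zero.app M) ↔
      ((D.mu hD ≫ TS.T.map D.q = D.mu hD ≫ TS.p.app E ≫ D.q ≫ TS.zero.app M) ∧
        ∀ (X : C) (g : X ⟶ TS.T.obj E),
          g ≫ TS.T.map D.q = g ≫ TS.p.app E ≫ D.q ≫ TS.zero.app M →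
          ∃! u : X ⟶ D.E2, u ≫ D.mu hD = g)) ∧
    (IsPullback (D.mu hD) (D.p0 ≫ D.q) (TS.T.map D.q) (TS.zero.app M) ↔
      ∀ (X : C) (f : X ⟶ TS.T.obj E),
        f ≫ TS.T.map D.q = f ≫ TS.p.app E ≫ D.q ≫ TS.zero.app M →
        ∃! b : X ⟶ E, IsBracket D hD.isPB1 f b) := by
  have hEq : D.mu hD ≫ TS.T.map D.q = D.mu hD ≫ TS.p.app E ≫ D.q ≫ TS.zero.app M := by
    rw [mu_Tq hD, hD.isPB0.w, ← mu_p hD]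
    simp [Category.assoc]
  have e1 : D.p0 ≫ D.q = D.mu hD ≫ TS.p.app E ≫ D.q := by
    rw [← Category.assoc, mu_p hD, hD.isPB0.w]
  have hPBiff : IsPullback (D.mu hD) (D.p0 ≫ D.q) (TS.T.map D.q) (TS.zero.app M) ↔
      ((D.mu hD ≫ TS.T.map D.q = D.mu hD ≫ TS.p.app E ≫ D.q ≫ TS.zero.app M) ∧
        ∀ (X : C) (g : X ⟶ TS.T.obj E),
          g ≫ TS.T.map D.q = g ≫ TS.p.app E ≫ D.q ≫ TS.zero.app M →
          ∃! u : X ⟶ D.E2, u ≫ D.mu hD = g) := by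
    constructor
    · intro hPB
      refine ⟨hEq, fun X g hg => ?_⟩
      have hw : g ≫ TS.T.map D.q = (g ≫ TS.p.app E ≫ D.q) ≫ TS.zero.app M := by
        rw [hg]; simp [Category.assoc]
      refine ⟨hPB.lift g (g ≫ TS.p.app E ≫ D.q) hw, hPB.lift_fst _ _ _, ?_⟩
      intro u hu
      apply hPB.hom_ext
      · rw [hPB.lift_fst, hu]
      · rw [hPB.lift_snd, e1]
        simp only [← Category.assoc]
        rw [hu]
    · rintro ⟨-, hU⟩
      have hsnd : ∀ s : PullbackCone (TS.T.map D.q) (TS.zero.app M),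
          s.fst ≫ TS.p.app E ≫ D.q = s.snd := by
        intro s
        have h2 := congrArg (fun t => t ≫ TS.p.app M) s.condition
        simp only [Category.assoc] at h2
        rw [p_nat' D.q] at h2
        simpa [TS.zero_p] using h2
      have heq : ∀ s : PullbackCone (TS.T.map D.q) (TS.zero.app M),
          s.fst ≫ TS.T.map D.q = s.fst ≫ TS.p.app E ≫ D.q ≫ TS.zero.app M := by
        intro s
        rw [s.condition, ← hsnd s]
        simp [Category.assoc]
      exact IsPullback.of_isLimit (PullbackCone.IsLimit.mk (mu_Tq hD)
        (fun s => (hU _ s.fst (heq s)).choose)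
        (fun s => (hU _ s.fst (heq s)).choose_spec.1)
        (fun s => by
          have hc := (hU _ s.fst (heq s)).choose_spec.1
          rw [e1]
          simp only [← Category.assoc]
          rw [hc]
          simpa [Category.assoc] using hsnd s)
        (fun s m hm _ => (hU _ s.fst (heq s)).choose_spec.2 m hm))
  refine ⟨hPBiff, hPBiff.trans ?_⟩
  constructor
  · rintro ⟨-, hQ⟩ X f hf
    obtain ⟨u, hu, huniq⟩ := hQ X f hf
    have hb := mu_bracket hD u
    rw [hu] at hb
    refine ⟨u ≫ D.p0, hb, ?_⟩
    intro b' hb'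
    have hu' : hD.isPB0.lift b' (f ≫ TS.p.app E) (bq_of_bracket hD hb') ≫ D.mu hD = f :=
      bracket_lift_mu hD hb'
    have h3 : hD.isPB0.lift b' (f ≫ TS.p.app E) (bq_of_bracket hD hb') = u :=
      huniq _ hu'
    calc b' = hD.isPB0.lift b' (f ≫ TS.p.app E) (bq_of_bracket hD hb') ≫ D.p0 :=
          (hD.isPB0.lift_fst _ _ _).symm
      _ = u ≫ D.p0 := by rw [h3]
  · intro hR
    refine ⟨hEq, fun X g hg => ?_⟩
    obtain ⟨b, hb, hbu⟩ := hR X g hg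
    refine ⟨hD.isPB0.lift b (g ≫ TS.p.app E) (bq_of_bracket hD hb),
      bracket_lift_mu hD hb, ?_⟩
    intro u' hu'
    have hb' := mu_bracket hD u'
    rw [hu'] at hb'
    have hpb : u' ≫ D.p0 = b := hbu _ hb'
    apply hD.isPB0.hom_ext
    · rw [hD.isPB0.lift_fst, hpb]
    · rw [hD.isPB0.lift_snd, ← hu', Category.assoc, mu_p hD]
end

section
/- Let q be a differential bundle in a tangent category and f: X → TE a map with fT(q) = fpq0. Then T({f}) = {T(f)c}, where on the left { - } denotes the bracket of the differential bundle q, and on the right { - } denotes the bracket of the differential bundle T(q) = (T(q), T(σ), T(ζ), T(λ)c); in particular T(f)c equalizes the appropriate pair so the right-hand bracket is defined. -/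
open CategoryTheory CategoryTheory.Limits

universe v u

variable {C : Type u} [Category.{v} C]

open TangentStructure in
/-- `T({f}) = {T(f)c}`, relating the bracket of `q` with the bracket of
the tangent bundle `T(q) = (T(q), T(σ), T(ζ), T(λ)c)`; in particular `T(f)c` equalizes
the appropriate pair, so the right-hand bracket is defined. -/
theorem T_bracket (TS : TangentStructure C) {E M X : C}
    (D : TS.DiffBundleData E M) (hD : TS.IsDiffBundle D)
    (hDT : TS.IsDiffBundle D.tangent)
    (f : X ⟶ TS.T.obj E)
    (hf : f ≫ TS.T.map D.q = f ≫ TS.p.app E ≫ D.q ≫ TS.zero.app M)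
    (b : X ⟶ E) (hb : IsBracket D hD.isPB1 f b) :
    ((TS.T.map f ≫ TS.c.app E) ≫ TS.T.map D.tangent.q =
      (TS.T.map f ≫ TS.c.app E) ≫ TS.p.app (TS.T.obj E) ≫ D.tangent.q ≫
        TS.zero.app (TS.T.obj M)) ∧
    IsBracket D.tangent hDT.isPB1 (TS.T.map f ≫ TS.c.app E) (TS.T.map b) := by
  obtain ⟨w, hfeq⟩ := hb
  -- naturality helpers
  have nat_c : ∀ {A B : C} (g : A ⟶ B),
      TS.T.map (TS.T.map g) ≫ TS.c.app B = TS.c.app A ≫ TS.T.map (TS.T.map g) := by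
    intro A B g
    simpa using TS.c.naturality g
  have nat_0 : ∀ {A B : C} (g : A ⟶ B),
      g ≫ TS.zero.app B = TS.zero.app A ≫ TS.T.map g := by
    intro A B g
    simpa using TS.zero.naturality g
  -- b ≫ q = f ≫ p ≫ q
  have hfTq : f ≫ TS.T.map D.q = b ≫ D.q ≫ TS.zero.app M := by
    calc f ≫ TS.T.map D.q
        = hD.isPB1.lift (b ≫ D.lam) (f ≫ TS.p.app E ≫ TS.zero.app E) w ≫
            TS.T.map D.σ ≫ TS.T.map D.q := by rw [← Category.assoc, ← hfeq]
      _ = hD.isPB1.lift (b ≫ D.lam) (f ≫ TS.p.app E ≫ TS.zero.app E) w ≫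
            TS.T.map D.p0 ≫ TS.T.map D.q := by
          rw [← TS.T.map_comp, ← TS.T.map_comp, hD.σ_q]
      _ = (b ≫ D.lam) ≫ TS.T.map D.q := by rw [← Category.assoc, hD.isPB1.lift_fst]
      _ = b ≫ D.q ≫ TS.zero.app M := by rw [Category.assoc, hD.lam_Tq]
  have key1 : b ≫ D.q = f ≫ TS.p.app E ≫ D.q := by
    have := congrArg (· ≫ TS.p.app M) (hfTq.symm.trans hf)
    simpa [TS.zero_p] using this
  have keyT : TS.T.map b ≫ TS.T.map D.q =
      TS.T.map f ≫ TS.T.map (TS.p.app E) ≫ TS.T.map D.q := by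
    rw [← TS.T.map_comp, ← TS.T.map_comp, ← TS.T.map_comp, key1]
  have hcq : TS.c.app E ≫ TS.T.map (TS.T.map D.q) =
      TS.T.map (TS.T.map D.q) ≫ TS.c.app M := (nat_c D.q).symm
  constructor
  · -- well-definedness
    show (TS.T.map f ≫ TS.c.app E) ≫ TS.T.map (TS.T.map D.q) =
      (TS.T.map f ≫ TS.c.app E) ≫ TS.p.app (TS.T.obj E) ≫ TS.T.map D.q ≫
        TS.zero.app (TS.T.obj M)
    calc (TS.T.map f ≫ TS.c.app E) ≫ TS.T.map (TS.T.map D.q)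
        = TS.T.map f ≫ TS.T.map (TS.T.map D.q) ≫ TS.c.app M := by
          rw [Category.assoc, hcq]
      _ = TS.T.map (f ≫ TS.T.map D.q) ≫ TS.c.app M := by rw [TS.T.map_comp, Category.assoc]
      _ = TS.T.map (f ≫ TS.p.app E ≫ D.q ≫ TS.zero.app M) ≫ TS.c.app M := by rw [hf]
      _ = TS.T.map f ≫ TS.T.map (TS.p.app E) ≫ TS.T.map D.q ≫
            TS.T.map (TS.zero.app M) ≫ TS.c.app M := by simp
      _ = TS.T.map f ≫ TS.T.map (TS.p.app E) ≫ TS.T.map D.q ≫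
            TS.zero.app (TS.T.obj M) := by rw [TS.c_zero]
      _ = (TS.T.map f ≫ TS.c.app E) ≫ TS.p.app (TS.T.obj E) ≫ TS.T.map D.q ≫
            TS.zero.app (TS.T.obj M) := by
          rw [Category.assoc, ← TS.c_p]
          simp
  · -- the bracket equation
    have w2 : (TS.T.map b ≫ D.tangent.lam) ≫ TS.T.map D.tangent.q =
        ((TS.T.map f ≫ TS.c.app E) ≫ TS.p.app (TS.T.obj E) ≫ TS.zero.app (TS.T.obj E)) ≫
          TS.T.map D.tangent.q := by
      show (TS.T.map b ≫ TS.T.map D.lam ≫ TS.c.app E) ≫ TS.T.map (TS.T.map D.q) =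
        ((TS.T.map f ≫ TS.c.app E) ≫ TS.p.app (TS.T.obj E) ≫ TS.zero.app (TS.T.obj E)) ≫
          TS.T.map (TS.T.map D.q)
      calc (TS.T.map b ≫ TS.T.map D.lam ≫ TS.c.app E) ≫ TS.T.map (TS.T.map D.q)
          = TS.T.map b ≫ TS.T.map D.lam ≫ TS.T.map (TS.T.map D.q) ≫ TS.c.app M := by
            simp only [Category.assoc]; rw [hcq]
        _ = TS.T.map b ≫ TS.T.map (D.lam ≫ TS.T.map D.q) ≫ TS.c.app M := by
            rw [TS.T.map_comp, Category.assoc]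
        _ = TS.T.map b ≫ TS.T.map (D.q ≫ TS.zero.app M) ≫ TS.c.app M := by
            rw [hD.lam_Tq]
        _ = TS.T.map b ≫ TS.T.map D.q ≫ TS.T.map (TS.zero.app M) ≫ TS.c.app M := by
            simp
        _ = TS.T.map b ≫ TS.T.map D.q ≫ TS.zero.app (TS.T.obj M) := by rw [TS.c_zero]
        _ = TS.T.map f ≫ TS.T.map (TS.p.app E) ≫ TS.T.map D.q ≫
              TS.zero.app (TS.T.obj M) := by
            rw [← Category.assoc, ← Category.assoc, keyT]; simp
        _ = TS.T.map f ≫ TS.T.map (TS.p.app E) ≫ TS.zero.app (TS.T.obj E) ≫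
              TS.T.map (TS.T.map D.q) := by rw [nat_0 (TS.T.map D.q)]
        _ = ((TS.T.map f ≫ TS.c.app E) ≫ TS.p.app (TS.T.obj E) ≫
              TS.zero.app (TS.T.obj E)) ≫ TS.T.map (TS.T.map D.q) := by
            rw [Category.assoc, ← TS.c_p]; simp
    refine ⟨w2, ?_⟩
    have hlift : TS.T.map (hD.isPB1.lift (b ≫ D.lam) (f ≫ TS.p.app E ≫ TS.zero.app E) w) ≫
        TS.c.app D.E2 =
        hDT.isPB1.lift (TS.T.map b ≫ D.tangent.lam)
          ((TS.T.map f ≫ TS.c.app E) ≫ TS.p.app (TS.T.obj E) ≫ TS.zero.app (TS.T.obj E)) w2 := by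
      apply hDT.isPB1.hom_ext
      · rw [hDT.isPB1.lift_fst]
        show (TS.T.map _ ≫ TS.c.app D.E2) ≫ TS.T.map (TS.T.map D.p0) =
          TS.T.map b ≫ TS.T.map D.lam ≫ TS.c.app E
        rw [Category.assoc, ← nat_c D.p0, ← Category.assoc, ← TS.T.map_comp,
          hD.isPB1.lift_fst, TS.T.map_comp, Category.assoc]
      · rw [hDT.isPB1.lift_snd]
        show (TS.T.map _ ≫ TS.c.app D.E2) ≫ TS.T.map (TS.T.map D.p1) =
          (TS.T.map f ≫ TS.c.app E) ≫ TS.p.app (TS.T.obj E) ≫ TS.zero.app (TS.T.obj E)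
        rw [Category.assoc, ← nat_c D.p1, ← Category.assoc, ← TS.T.map_comp,
          hD.isPB1.lift_snd]
        calc TS.T.map (f ≫ TS.p.app E ≫ TS.zero.app E) ≫ TS.c.app E
            = TS.T.map f ≫ TS.T.map (TS.p.app E) ≫ TS.T.map (TS.zero.app E) ≫
                TS.c.app E := by simp
          _ = TS.T.map f ≫ TS.T.map (TS.p.app E) ≫ TS.zero.app (TS.T.obj E) := by
              rw [TS.c_zero]
          _ = (TS.T.map f ≫ TS.c.app E) ≫ TS.p.app (TS.T.obj E) ≫
                TS.zero.app (TS.T.obj E) := by rw [Category.assoc, ← TS.c_p]; simp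
    calc TS.T.map f ≫ TS.c.app E
        = TS.T.map (hD.isPB1.lift (b ≫ D.lam) (f ≫ TS.p.app E ≫ TS.zero.app E) w ≫
            TS.T.map D.σ) ≫ TS.c.app E := by rw [← hfeq]
      _ = TS.T.map (hD.isPB1.lift (b ≫ D.lam) (f ≫ TS.p.app E ≫ TS.zero.app E) w) ≫
            TS.T.map (TS.T.map D.σ) ≫ TS.c.app E := by rw [TS.T.map_comp, Category.assoc]
      _ = (TS.T.map (hD.isPB1.lift (b ≫ D.lam) (f ≫ TS.p.app E ≫ TS.zero.app E) w) ≫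
            TS.c.app D.E2) ≫ TS.T.map (TS.T.map D.σ) := by
          rw [nat_c D.σ]; simp
      _ = hDT.isPB1.lift (TS.T.map b ≫ D.tangent.lam)
            ((TS.T.map f ≫ TS.c.app E) ≫ TS.p.app (TS.T.obj E) ≫
              TS.zero.app (TS.T.obj E)) w2 ≫ TS.T.map D.tangent.σ := by rw [hlift]; rfl
end

section
/- For a differential bundle q in a tangent category, λ: E → TE is the joint equalizer of the two pairs of maps (T(q), pq0): TE → TM and (p, pqζ): TE → E; that is, λ equalizes both pairs, and every f: X → TE equalizing both pairs factors uniquely through λ. In particular, λ is monic. -/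
open CategoryTheory CategoryTheory.Limits

universe v u

variable {C : Type u} [Category.{v} C]

open TangentStructure in
/-- Key computation: any map into `T(E₂)` whose components are `u ≫ λ` and `(u ≫ q ≫ ζ) ≫ 0`
composes with `T(σ)` to give `u ≫ λ`. -/
lemma keyA (TS : TangentStructure C) {E M : C}
    {D : TS.DiffBundleData E M} (hPre : TS.IsPreDiffBundle D)
    {X : C} (u : X ⟶ E) (L : X ⟶ TS.T.obj D.E2)
    (w0 : L ≫ TS.T.map D.p0 = u ≫ D.lam)
    (w1 : L ≫ TS.T.map D.p1 = (u ≫ D.q ≫ D.ζ) ≫ TS.zero.app E) :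
    L ≫ TS.T.map D.σ = u ≫ D.lam := by
  have hzq : (u ≫ D.q ≫ D.ζ) ≫ D.q = u ≫ D.q := by
    simp [reassoc_of% hPre.ζ_q, hPre.ζ_q]
  have h : u ≫ D.q = (u ≫ D.q ≫ D.ζ) ≫ D.q := hzq.symm
  have h' : (u ≫ D.lam) ≫ TS.T.map D.q = ((u ≫ D.q ≫ D.ζ) ≫ D.lam) ≫ TS.T.map D.q := by
    simp [hPre.lam_Tq, reassoc_of% hPre.ζ_q]
  have key := hPre.lam_add0 u (u ≫ D.q ≫ D.ζ) h h'
  have hL : L = hPre.isPB1.lift (u ≫ D.lam) ((u ≫ D.q ≫ D.ζ) ≫ D.lam) h' := by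
    apply hPre.isPB1.hom_ext
    · rw [hPre.isPB1.lift_fst, w0]
    · rw [hPre.isPB1.lift_snd, w1]
      simp only [Category.assoc, hPre.lam_zero1]
  have hlift : hPre.isPB0.lift u (u ≫ D.q ≫ D.ζ) h ≫ D.σ = u := by
    rw [hPre.σ_comm]
    exact hPre.σ_zero u h.symm
  calc L ≫ TS.T.map D.σ
      = hPre.isPB1.lift (u ≫ D.lam) ((u ≫ D.q ≫ D.ζ) ≫ D.lam) h' ≫ TS.T.map D.σ := by
        rw [hL]
    _ = hPre.isPB0.lift u (u ≫ D.q ≫ D.ζ) h ≫ D.σ ≫ D.lam := key.symm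
    _ = u ≫ D.lam := by rw [← Category.assoc, hlift]

open TangentStructure in
/-- for a differential bundle, `λ : E ⟶ TE` is the joint equalizer of the
pairs `(T(q), pq0)` and `(p, pqζ)`; in particular `λ` is monic. -/
theorem lam_joint_equalizer (TS : TangentStructure C) {E M : C}
    (D : TS.DiffBundleData E M) (hD : TS.IsDiffBundle D) :
    (D.lam ≫ TS.T.map D.q = D.lam ≫ TS.p.app E ≫ D.q ≫ TS.zero.app M) ∧
    (D.lam ≫ TS.p.app E = D.lam ≫ TS.p.app E ≫ D.q ≫ D.ζ) ∧
    (∀ (X : C) (f : X ⟶ TS.T.obj E),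
      f ≫ TS.T.map D.q = f ≫ TS.p.app E ≫ D.q ≫ TS.zero.app M →
      f ≫ TS.p.app E = f ≫ TS.p.app E ≫ D.q ≫ D.ζ →
      ∃! u : X ⟶ E, u ≫ D.lam = f) ∧
    Mono D.lam := by
  have hPre := hD.toIsPreDiffBundle
  have eq1 : D.lam ≫ TS.T.map D.q = D.lam ≫ TS.p.app E ≫ D.q ≫ TS.zero.app M := by
    rw [hPre.lam_Tq, ← Category.assoc, hPre.lam_p]
    simp [reassoc_of% hPre.ζ_q, hPre.ζ_q]
  have eq2 : D.lam ≫ TS.p.app E = D.lam ≫ TS.p.app E ≫ D.q ≫ D.ζ := by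
    rw [hPre.lam_p, ← Category.assoc, hPre.lam_p]
    simp [reassoc_of% hPre.ζ_q, hPre.ζ_q]
  set L0 := hPre.isPB1.lift (D.p0 ≫ D.lam) (D.p1 ≫ TS.zero.app E) (mu_w hPre) with hL0
  have hLp0 : L0 ≫ TS.T.map D.p0 = D.p0 ≫ D.lam := hPre.isPB1.lift_fst _ _ _
  have hLp1 : L0 ≫ TS.T.map D.p1 = D.p1 ≫ TS.zero.app E := hPre.isPB1.lift_snd _ _ _
  have hμ : IsPullback (L0 ≫ TS.T.map D.σ) (D.p0 ≫ D.q) (TS.T.map D.q) (TS.zero.app M) :=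
    hD.univ 0 (mu_w hPre)
  have hnatσ : TS.T.map D.σ ≫ TS.p.app E = TS.p.app D.E2 ≫ D.σ := by
    simpa using TS.p.naturality D.σ
  have hnat0 : TS.p.app D.E2 ≫ D.p0 = TS.T.map D.p0 ≫ TS.p.app E := by
    simpa using (TS.p.naturality D.p0).symm
  have hnat1 : TS.p.app D.E2 ≫ D.p1 = TS.T.map D.p1 ≫ TS.p.app E := by
    simpa using (TS.p.naturality D.p1).symm
  have fact : ∀ (X : C) (f : X ⟶ TS.T.obj E),
      f ≫ TS.T.map D.q = f ≫ TS.p.app E ≫ D.q ≫ TS.zero.app M →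
      f ≫ TS.p.app E = f ≫ TS.p.app E ≫ D.q ≫ D.ζ →
      ∃! u : X ⟶ E, u ≫ D.lam = f := by
    intro X f hf1 hf2
    have wf : f ≫ TS.T.map D.q = ((f ≫ TS.p.app E) ≫ D.q) ≫ TS.zero.app M := by
      simpa only [Category.assoc] using hf1
    obtain ⟨h, hfst, hsnd⟩ :
        ∃ h : X ⟶ D.E2, h ≫ L0 ≫ TS.T.map D.σ = f ∧
          h ≫ D.p0 ≫ D.q = (f ≫ TS.p.app E) ≫ D.q :=
      ⟨hμ.lift _ _ wf, hμ.lift_fst _ _ _, hμ.lift_snd _ _ _⟩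
    have huvq' : (h ≫ D.p1) ≫ D.q = (h ≫ D.p0) ≫ D.q := by
      rw [Category.assoc, Category.assoc, ← hPre.isPB0.w]
    have wv : ((h ≫ D.p1) ≫ D.q ≫ D.ζ) ≫ D.q = (h ≫ D.p1) ≫ D.q := by
      simp [reassoc_of% hPre.ζ_q, hPre.ζ_q]
    have hw0 : (h ≫ L0) ≫ TS.p.app D.E2 =
        hPre.isPB0.lift ((h ≫ D.p1) ≫ D.q ≫ D.ζ) (h ≫ D.p1) wv := by
      apply hPre.isPB0.hom_ext
      · rw [hPre.isPB0.lift_fst]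
        simp only [Category.assoc, hnat0, reassoc_of% hnat0, hLp0, reassoc_of% hLp0,
          hPre.lam_p, reassoc_of% hPre.lam_p, hPre.isPB0.w, reassoc_of% hPre.isPB0.w]
      · rw [hPre.isPB0.lift_snd]
        simp only [Category.assoc, hnat1, reassoc_of% hnat1, hLp1, reassoc_of% hLp1,
          TS.zero_p, reassoc_of% (TS.zero_p E), Category.comp_id]
    have hfp : f ≫ TS.p.app E = h ≫ D.p1 := by
      rw [← hfst]
      calc (h ≫ L0 ≫ TS.T.map D.σ) ≫ TS.p.app E
          = ((h ≫ L0) ≫ TS.p.app D.E2) ≫ D.σ := by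
            simp only [Category.assoc, hnatσ, reassoc_of% hnatσ]
        _ = hPre.isPB0.lift ((h ≫ D.p1) ≫ D.q ≫ D.ζ) (h ≫ D.p1) wv ≫ D.σ := by rw [hw0]
        _ = h ≫ D.p1 := hPre.σ_zero (h ≫ D.p1) wv
    have hv1 : h ≫ D.p1 = (h ≫ D.p0) ≫ D.q ≫ D.ζ := by
      have h2 := hf2
      simp only [← Category.assoc] at h2
      rw [hfp] at h2
      rw [h2, huvq']
      simp only [Category.assoc]
    have key2 : ∀ u' : X ⟶ E, u' ≫ D.lam = f → u' = h ≫ D.p0 := by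
      intro u' hu'
      have w1' : u' ≫ D.q = (u' ≫ D.q ≫ D.ζ) ≫ D.q := by
        simp [reassoc_of% hPre.ζ_q, hPre.ζ_q]
      have hext : hPre.isPB0.lift u' (u' ≫ D.q ≫ D.ζ) w1' = h := by
        apply hμ.hom_ext
        · rw [hfst, ← hu', ← Category.assoc]
          refine keyA TS hPre u' (hPre.isPB0.lift u' (u' ≫ D.q ≫ D.ζ) w1' ≫ L0) ?_ ?_
          · calc (hPre.isPB0.lift u' (u' ≫ D.q ≫ D.ζ) w1' ≫ L0) ≫ TS.T.map D.p0
                = (hPre.isPB0.lift u' (u' ≫ D.q ≫ D.ζ) w1' ≫ D.p0) ≫ D.lam := by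
                  simp only [Category.assoc, hLp0, reassoc_of% hLp0]
              _ = u' ≫ D.lam := by rw [hPre.isPB0.lift_fst]
          · calc (hPre.isPB0.lift u' (u' ≫ D.q ≫ D.ζ) w1' ≫ L0) ≫ TS.T.map D.p1
                = (hPre.isPB0.lift u' (u' ≫ D.q ≫ D.ζ) w1' ≫ D.p1) ≫ TS.zero.app E := by
                  simp only [Category.assoc, hLp1, reassoc_of% hLp1]
              _ = (u' ≫ D.q ≫ D.ζ) ≫ TS.zero.app E := by rw [hPre.isPB0.lift_snd]
        · rw [hsnd, ← hu']
          calc hPre.isPB0.lift u' (u' ≫ D.q ≫ D.ζ) w1' ≫ D.p0 ≫ D.q = u' ≫ D.q := by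
                rw [← Category.assoc, hPre.isPB0.lift_fst]
            _ = ((u' ≫ D.lam) ≫ TS.p.app E) ≫ D.q := by
                simp only [Category.assoc, hPre.lam_p, reassoc_of% hPre.lam_p,
                  hPre.ζ_q, reassoc_of% hPre.ζ_q, Category.comp_id]
      calc u' = hPre.isPB0.lift u' (u' ≫ D.q ≫ D.ζ) w1' ≫ D.p0 :=
            (hPre.isPB0.lift_fst _ _ _).symm
        _ = h ≫ D.p0 := by rw [hext]
    refine ⟨h ≫ D.p0, ?_, key2⟩
    show (h ≫ D.p0) ≫ D.lam = f
    rw [← hfst]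
    symm
    rw [← Category.assoc]
    refine keyA TS hPre (h ≫ D.p0) (h ≫ L0) ?_ ?_
    · simp only [Category.assoc, hLp0, reassoc_of% hLp0]
    · rw [← hv1]
      simp only [Category.assoc, hLp1, reassoc_of% hLp1]
  refine ⟨eq1, eq2, fact, ⟨fun {Z} a b hab => ?_⟩⟩
  have hf1 : (a ≫ D.lam) ≫ TS.T.map D.q =
      (a ≫ D.lam) ≫ TS.p.app E ≫ D.q ≫ TS.zero.app M := by
    simp only [Category.assoc, hPre.lam_Tq, reassoc_of% hPre.lam_Tq,
      hPre.lam_p, reassoc_of% hPre.lam_p, hPre.ζ_q, reassoc_of% hPre.ζ_q, Category.comp_id]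
  have hf2 : (a ≫ D.lam) ≫ TS.p.app E = (a ≫ D.lam) ≫ TS.p.app E ≫ D.q ≫ D.ζ := by
    simp only [Category.assoc, hPre.lam_p, reassoc_of% hPre.lam_p,
      hPre.ζ_q, reassoc_of% hPre.ζ_q, Category.comp_id]
  obtain ⟨u, hu, huniq⟩ := fact Z (a ≫ D.lam) hf1 hf2
  exact (huniq a rfl).trans (huniq b hab.symm).symm
end

section
/- For any differential bundle q in a tangent category, the diagram M →^ζ E ⇉ TE, with parallel pair 0: E → TE and λ: E → TE, is an equalizer: ζ0 = ζλ, and every x with x0 = xλ factors uniquely through ζ. -/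
open CategoryTheory CategoryTheory.Limits

universe v u

variable {C : Type u} [Category.{v} C]

open TangentStructure in
/-- for any differential bundle, `M →^ζ E ⇉ TE` (with parallel pair `0` and
`λ`) is an equalizer. -/
theorem zeta_equalizer_of_zero_lam (TS : TangentStructure C) {E M : C}
    (D : TS.DiffBundleData E M) (hD : TS.IsDiffBundle D) :
    (D.ζ ≫ TS.zero.app E = D.ζ ≫ D.lam) ∧
    (∀ (X : C) (x : X ⟶ E), x ≫ TS.zero.app E = x ≫ D.lam →
      ∃! u : X ⟶ M, u ≫ D.ζ = x) := by
  have hpre := hD.toIsPreDiffBundle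
  refine ⟨hpre.lam_zero1.symm, fun X x hx => ?_⟩
  -- naturality of zero
  have znat : ∀ {A B : C} (f : A ⟶ B),
      f ≫ TS.zero.app B = TS.zero.app A ≫ TS.T.map f := by
    intro A B f
    simpa using TS.zero.naturality f
  have w1 : (x ≫ D.q ≫ D.ζ) ≫ D.q = x ≫ D.q := by
    simp [hpre.ζ_q]
  -- key computation: composing zero-like lifts with μ
  have key : ∀ (a b : X ⟶ E) (w : a ≫ D.q = b ≫ D.q),
      a ≫ D.lam = a ≫ TS.zero.app E → b ≫ D.lam = b ≫ TS.zero.app E →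
      hpre.isPB0.lift a b w ≫
        (hpre.isPB1.lift (D.p0 ≫ D.lam) (D.p1 ≫ TS.zero.app E) (mu_w hpre) ≫ TS.T.map D.σ)
        = (hpre.isPB0.lift a b w ≫ D.σ) ≫ TS.zero.app E := by
    intro a b w ha hb
    have step : hpre.isPB0.lift a b w ≫
        hpre.isPB1.lift (D.p0 ≫ D.lam) (D.p1 ≫ TS.zero.app E) (mu_w hpre)
        = hpre.isPB0.lift a b w ≫ TS.zero.app D.E2 := by
      apply hpre.isPB1.hom_ext
      · rw [Category.assoc, Category.assoc, hpre.isPB1.lift_fst, ← znat D.p0,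
          reassoc_of% hpre.isPB0.lift_fst a b w, reassoc_of% hpre.isPB0.lift_fst a b w, ha]
      · rw [Category.assoc, Category.assoc, hpre.isPB1.lift_snd, ← znat D.p1]
    rw [← Category.assoc, step, Category.assoc, ← znat D.σ, ← Category.assoc]
  have hz1 : (x ≫ D.q ≫ D.ζ) ≫ D.lam = (x ≫ D.q ≫ D.ζ) ≫ TS.zero.app E := by
    simp only [Category.assoc, hpre.lam_zero1]
  -- the two lifts into E2 agree on μ
  have hμ : hpre.isPB0.lift (x ≫ D.q ≫ D.ζ) x w1 ≫
        (hpre.isPB1.lift (D.p0 ≫ D.lam) (D.p1 ≫ TS.zero.app E) (mu_w hpre) ≫ TS.T.map D.σ)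
      = hpre.isPB0.lift x (x ≫ D.q ≫ D.ζ) w1.symm ≫
        (hpre.isPB1.lift (D.p0 ≫ D.lam) (D.p1 ≫ TS.zero.app E) (mu_w hpre) ≫ TS.T.map D.σ) := by
    rw [key _ _ _ hz1 hx.symm, key _ _ _ hx.symm hz1]
    congr 1
    rw [hpre.σ_comm (x ≫ D.q ≫ D.ζ) x w1]
  -- use universality of the lift (k = 0)
  have hPB := hD.univ 0 (mu_w hpre)
  have hfst : hpre.isPB0.lift (x ≫ D.q ≫ D.ζ) x w1
      = hpre.isPB0.lift x (x ≫ D.q ≫ D.ζ) w1.symm := by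
    apply hPB.hom_ext
    · exact hμ
    · show _ ≫ (D.p0 ≫ D.q) = _ ≫ (D.p0 ≫ D.q)
      rw [reassoc_of% hpre.isPB0.lift_fst (x ≫ D.q ≫ D.ζ) x w1,
        reassoc_of% hpre.isPB0.lift_fst x (x ≫ D.q ≫ D.ζ) w1.symm]
      simp [hpre.ζ_q]
  have hxfix : x ≫ D.q ≫ D.ζ = x := by
    have h2 := congrArg (· ≫ D.p0) hfst
    simpa [hpre.isPB0.lift_fst] using h2
  refine ⟨x ≫ D.q, by simpa using hxfix, fun u hu => ?_⟩
  have h3 : (u ≫ D.ζ) ≫ D.q = x ≫ D.q := by rw [hu]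
  simpa [hpre.ζ_q] using h3
end

section
/- Every linear morphism of differential bundles is additive: if (f, g): (q, σ, ζ, λ) → (q', σ', ζ', λ') is a bundle morphism with fλ' = λT(f), then σf = ⟨π₀f, π₁f⟩σ' and ζf = gζ'. -/
open CategoryTheory CategoryTheory.Limits

universe v u

variable {C : Type u} [Category.{v} C]

section Aux

lemma liftCongr {P X Y Z : C} {fst : P ⟶ X} {snd : P ⟶ Y} {f : X ⟶ Z} {g : Y ⟶ Z}
    (h : IsPullback fst snd f g) {W : C} {a a' : W ⟶ X} {b b' : W ⟶ Y}
    (ha : a = a') (hb : b = b') (w : a ≫ f = b ≫ g) (w' : a' ≫ f = b' ≫ g) :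
    h.lift a b w = h.lift a' b' w' := by subst ha; subst hb; rfl

namespace TangentStructure

variable {TS : TangentStructure C} {E M : C} {D : TS.DiffBundleData E M}

lemma lift_p0_p1 (hD : TS.IsPreDiffBundle D) (w : D.p0 ≫ D.q = D.p1 ≫ D.q) :
    hD.isPB0.lift D.p0 D.p1 w = 𝟙 D.E2 := by
  apply hD.isPB0.hom_ext <;> simp

lemma e_w (hD : TS.IsPreDiffBundle D) :
    (𝟙 E) ≫ D.q = (D.q ≫ D.ζ) ≫ D.q := by
  simp [Category.assoc, hD.ζ_q]

/-- The section `e = ⟨1, qζ⟩ : E ⟶ E₂`. -/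
noncomputable def eSec (hD : TS.IsPreDiffBundle D) : E ⟶ D.E2 :=
  hD.isPB0.lift (𝟙 E) (D.q ≫ D.ζ) (e_w hD)

lemma eSec_p0 (hD : TS.IsPreDiffBundle D) : eSec hD ≫ D.p0 = 𝟙 E := by
  simp [eSec]

lemma eSec_sigma (hD : TS.IsPreDiffBundle D) : eSec hD ≫ D.σ = 𝟙 E := by
  rw [eSec, hD.σ_comm]
  have h : ((𝟙 E) ≫ D.q ≫ D.ζ) ≫ D.q = (𝟙 E) ≫ D.q := by
    simp [Category.assoc, hD.ζ_q]
  rw [liftCongr hD.isPB0 (by simp) (by simp) (e_w hD).symm h]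
  exact hD.σ_zero (𝟙 E) h

lemma lam_eq_eSec_mu (hD : TS.IsPreDiffBundle D) :
    eSec hD ≫ D.mu hD = D.lam := by
  have w2 : D.lam ≫ TS.T.map D.q = (D.q ≫ D.ζ ≫ TS.zero.app E) ≫ TS.T.map D.q := by
    have hz : TS.zero.app E ≫ TS.T.map D.q = D.q ≫ TS.zero.app M := by
      simpa using (TS.zero.naturality D.q).symm
    simp only [Category.assoc, hD.lam_Tq, hz, reassoc_of% hD.ζ_q, Category.id_comp]
  have step1 : eSec hD ≫ hD.isPB1.lift (D.p0 ≫ D.lam) (D.p1 ≫ TS.zero.app E) (mu_w hD) =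
      hD.isPB1.lift D.lam (D.q ≫ D.ζ ≫ TS.zero.app E) w2 := by
    apply hD.isPB1.hom_ext
    · rw [Category.assoc, hD.isPB1.lift_fst, hD.isPB1.lift_fst, ← Category.assoc,
        eSec_p0 hD, Category.id_comp]
    · rw [Category.assoc, hD.isPB1.lift_snd, hD.isPB1.lift_snd, ← Category.assoc, eSec,
        hD.isPB0.lift_snd, Category.assoc]
  have h' : ((𝟙 E ≫ D.lam) ≫ TS.T.map D.q = ((D.q ≫ D.ζ) ≫ D.lam) ≫ TS.T.map D.q) := by
    simp only [Category.id_comp, Category.assoc, hD.lam_Tq, reassoc_of% hD.ζ_q]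
  have key := hD.lam_add0 (𝟙 E) (D.q ≫ D.ζ) (e_w hD) h'
  rw [show hD.isPB0.lift (𝟙 E) (D.q ≫ D.ζ) (e_w hD) = eSec hD from rfl] at key
  have key2 : eSec hD ≫ D.σ ≫ D.lam = D.lam := by
    rw [← Category.assoc, eSec_sigma hD, Category.id_comp]
  rw [key2] at key
  have key3 : hD.isPB1.lift (𝟙 E ≫ D.lam) ((D.q ≫ D.ζ) ≫ D.lam) h' =
      hD.isPB1.lift D.lam (D.q ≫ D.ζ ≫ TS.zero.app E) w2 :=
    liftCongr hD.isPB1 (Category.id_comp _) (by rw [Category.assoc, hD.lam_zero1]) _ _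
  rw [key3] at key
  rw [DiffBundleData.mu, ← Category.assoc, step1]
  exact key.symm

lemma mu_mono {TS : TangentStructure C} {E M : C} {D : TS.DiffBundleData E M}
    (hD : TS.IsDiffBundle D) : Mono (D.mu hD.toIsPreDiffBundle) := by
  have hPB := hD.univ 0 (mu_w hD.toIsPreDiffBundle)
  simp only [fpow, Functor.id_map] at hPB
  have hzero : Mono (TS.zero.app M) := by
    constructor
    intro X a b hab
    have := congrArg (· ≫ TS.p.app M) hab
    simpa [Category.assoc, TS.zero_p M] using this
  constructor
  intro X a b hab
  apply hPB.hom_ext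
  · exact hab
  · have h1 : (a ≫ (D.p0 ≫ D.q)) ≫ TS.zero.app M = (b ≫ (D.p0 ≫ D.q)) ≫ TS.zero.app M := by
      have wsq : D.mu hD.toIsPreDiffBundle ≫ TS.T.map D.q =
          (D.p0 ≫ D.q) ≫ TS.zero.app M := hPB.w
      calc (a ≫ (D.p0 ≫ D.q)) ≫ TS.zero.app M
          = a ≫ ((D.p0 ≫ D.q) ≫ TS.zero.app M) := by rw [Category.assoc]
        _ = a ≫ (D.mu hD.toIsPreDiffBundle ≫ TS.T.map D.q) := by rw [wsq]
        _ = (a ≫ D.mu hD.toIsPreDiffBundle) ≫ TS.T.map D.q := by rw [Category.assoc]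
        _ = (b ≫ D.mu hD.toIsPreDiffBundle) ≫ TS.T.map D.q := by rw [hab]
        _ = b ≫ (D.mu hD.toIsPreDiffBundle ≫ TS.T.map D.q) := by rw [Category.assoc]
        _ = (b ≫ (D.p0 ≫ D.q)) ≫ TS.zero.app M := by
              rw [wsq]; simp only [Category.assoc]
    exact hzero.right_cancellation _ _ h1

lemma lam_mono {TS : TangentStructure C} {E M : C} {D : TS.DiffBundleData E M}
    (hD : TS.IsDiffBundle D) : Mono D.lam := by
  have hμ := mu_mono hD
  constructor
  intro X a b hab
  rw [← lam_eq_eSec_mu hD.toIsPreDiffBundle] at hab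
  have h1 : (a ≫ eSec hD.toIsPreDiffBundle) = (b ≫ eSec hD.toIsPreDiffBundle) := by
    apply hμ.right_cancellation
    rw [Category.assoc, Category.assoc]
    exact hab
  have := congrArg (· ≫ D.p0) h1
  simpa [Category.assoc, eSec_p0 hD.toIsPreDiffBundle] using this

/-- Pushing a lift into `T₂` along `T₂.map f`. -/
lemma lift_T2_map {TS : TangentStructure C} {E E' X : C} (f : E ⟶ E')
    (a b : X ⟶ TS.T.obj E) (w : a ≫ TS.p.app E = b ≫ TS.p.app E)
    (w' : (a ≫ TS.T.map f) ≫ TS.p.app E' = (b ≫ TS.T.map f) ≫ TS.p.app E') :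
    (TS.isPB0 E).lift a b w ≫ TS.T2.map f =
      (TS.isPB0 E').lift (a ≫ TS.T.map f) (b ≫ TS.T.map f) w' := by
  apply (TS.isPB0 E').hom_ext
  · rw [Category.assoc, (TS.isPB0 E').lift_fst, TS.π0.naturality, ← Category.assoc,
      (TS.isPB0 E).lift_fst]
  · rw [Category.assoc, (TS.isPB0 E').lift_snd, TS.π1.naturality, ← Category.assoc,
      (TS.isPB0 E).lift_snd]

end TangentStructure

end Aux

open TangentStructure in
/-- every linear morphism of differential bundles is additive:
`σf = ⟨π₀f, π₁f⟩σ'` and `ζf = gζ'`. -/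
theorem linear_is_additive (TS : TangentStructure C) {E M E' M' : C}
    (D : TS.DiffBundleData E M) (D' : TS.DiffBundleData E' M')
    (hD : TS.IsDiffBundle D) (hD' : TS.IsDiffBundle D')
    (f : E ⟶ E') (g : M ⟶ M')
    (hm : f ≫ D'.q = D.q ≫ g) (hl : f ≫ D'.lam = D.lam ≫ TS.T.map f) :
    (∀ (w : (D.p0 ≫ f) ≫ D'.q = (D.p1 ≫ f) ≫ D'.q),
      D.σ ≫ f = hD'.isPB0.lift (D.p0 ≫ f) (D.p1 ≫ f) w ≫ D'.σ) ∧
    D.ζ ≫ f = g ≫ D'.ζ := by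
  have hnat : TS.T.map f ≫ TS.p.app E' = TS.p.app E ≫ f :=
    (TS.p.naturality f).trans (by simp)
  constructor
  · intro w
    have hmono : Mono D'.lam := lam_mono hD'
    rw [← cancel_mono D'.lam]
    -- the additivity proof `(f₀ ≫ λ) ≫ p = (f₁ ≫ λ) ≫ p` for `D`
    have hp' : (D.p0 ≫ D.lam) ≫ TS.p.app E = (D.p1 ≫ D.lam) ≫ TS.p.app E := by
      rw [Category.assoc, Category.assoc, hD.lam_p, ← Category.assoc, ← Category.assoc,
        hD.isPB0.w]
    have hL := hD.lam_add1 D.p0 D.p1 hD.isPB0.w hp'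
    rw [lift_p0_p1 hD.toIsPreDiffBundle, Category.id_comp] at hL
    -- hL : D.σ ≫ D.lam = (TS.isPB0 E).lift (p0≫λ) (p1≫λ) hp' ≫ add
    have w2 : ((D.p0 ≫ D.lam) ≫ TS.T.map f) ≫ TS.p.app E' =
        ((D.p1 ≫ D.lam) ≫ TS.T.map f) ≫ TS.p.app E' := by
      simp only [Category.assoc]
      rw [hnat]
      simp only [← Category.assoc]
      rw [hp']
    have hLHS : (D.σ ≫ f) ≫ D'.lam =
        (TS.isPB0 E').lift ((D.p0 ≫ D.lam) ≫ TS.T.map f) ((D.p1 ≫ D.lam) ≫ TS.T.map f) w2 ≫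
          TS.add.app E' := by
      calc (D.σ ≫ f) ≫ D'.lam
          = D.σ ≫ f ≫ D'.lam := by rw [Category.assoc]
        _ = D.σ ≫ D.lam ≫ TS.T.map f := by rw [hl]
        _ = (D.σ ≫ D.lam) ≫ TS.T.map f := by rw [Category.assoc]
        _ = ((TS.isPB0 E).lift (D.p0 ≫ D.lam) (D.p1 ≫ D.lam) hp' ≫ TS.add.app E) ≫
              TS.T.map f := by rw [hL]
        _ = (TS.isPB0 E).lift (D.p0 ≫ D.lam) (D.p1 ≫ D.lam) hp' ≫
              (TS.add.app E ≫ TS.T.map f) := by rw [Category.assoc]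
        _ = (TS.isPB0 E).lift (D.p0 ≫ D.lam) (D.p1 ≫ D.lam) hp' ≫
              (TS.T2.map f ≫ TS.add.app E') := by rw [TS.add.naturality]
        _ = ((TS.isPB0 E).lift (D.p0 ≫ D.lam) (D.p1 ≫ D.lam) hp' ≫ TS.T2.map f) ≫
              TS.add.app E' := by rw [Category.assoc]
        _ = _ := by rw [lift_T2_map f _ _ hp' w2]
    have hp'' : ((D.p0 ≫ f) ≫ D'.lam) ≫ TS.p.app E' =
        ((D.p1 ≫ f) ≫ D'.lam) ≫ TS.p.app E' := by
      rw [Category.assoc (D.p0 ≫ f), hD'.lam_p, Category.assoc (D.p1 ≫ f), hD'.lam_p,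
        ← Category.assoc (D.p0 ≫ f), ← Category.assoc (D.p1 ≫ f), w]
    have hR := hD'.lam_add1 (D.p0 ≫ f) (D.p1 ≫ f) w hp''
    have hR' : (hD'.isPB0.lift (D.p0 ≫ f) (D.p1 ≫ f) w ≫ D'.σ) ≫ D'.lam =
        (TS.isPB0 E').lift ((D.p0 ≫ f) ≫ D'.lam) ((D.p1 ≫ f) ≫ D'.lam) hp'' ≫
          TS.add.app E' := by
      rw [Category.assoc]; exact hR
    refine hLHS.trans (Eq.trans ?_ hR'.symm)
    exact congrArg (· ≫ TS.add.app E')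
      (liftCongr (TS.isPB0 E')
        (by rw [Category.assoc, ← hl, ← Category.assoc])
        (by rw [Category.assoc, ← hl, ← Category.assoc]) w2 hp'')
  · -- ζ-part
    have key : D.q ≫ g ≫ D'.ζ = D.q ≫ D.ζ ≫ f := by
      have h1 : f ≫ D'.lam ≫ TS.p.app E' = D.lam ≫ TS.T.map f ≫ TS.p.app E' := by
        rw [← Category.assoc, hl, Category.assoc]
      rw [hD'.lam_p, hnat, ← Category.assoc, hm, Category.assoc, ← Category.assoc D.lam,
        hD.lam_p, Category.assoc] at h1
      exact h1
    calc D.ζ ≫ f = (D.ζ ≫ D.q) ≫ D.ζ ≫ f := by rw [hD.ζ_q, Category.id_comp]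
      _ = D.ζ ≫ (D.q ≫ D.ζ ≫ f) := by rw [Category.assoc]
      _ = D.ζ ≫ (D.q ≫ g ≫ D'.ζ) := by rw [key]
      _ = (D.ζ ≫ D.q) ≫ g ≫ D'.ζ := by rw [Category.assoc]
      _ = g ≫ D'.ζ := by rw [hD.ζ_q, Category.id_comp]
end
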